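/- arXiv:2605.14706 — 3 statements merged into one kernel-verified Lean document; each statement's English description precedes it below -/
import Mathlib

section
/- For all positive integers a, b, c, the joint distribution of (volume, trace) over boxed plane partitions equals the joint distribution of (corner-hook volume, number of corners): as polynomials in q and t, Σ_{π ∈ PP(a,b,c)} q^{|π|} t^{tr(π)} = Σ_{π ∈ PP(a,b,c)} q^{|π|_ch} t^{cor(π)}. -/
attribute [local instance] Classical.propDecidable

noncomputable section

/-- A plane partition with diagram inside the box `[a]×[b]×[c]`, recorded by its
matrix of heights `π i j` (0-indexed), with weakly decreasing rows and columns. -/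
def IsPP (a b c : ℕ) (π : Fin a → Fin b → Fin (c+1)) : Prop :=
  (∀ (i i' : Fin a) (j : Fin b), i ≤ i' → π i' j ≤ π i j) ∧
  (∀ (i : Fin a) (j j' : Fin b), j ≤ j' → π i j' ≤ π i j)

/-- The entry `π_{i,j}` (1-based indices), zero outside the box. -/
def pent {a b c : ℕ} (π : Fin a → Fin b → Fin (c+1)) (i j : ℕ) : ℕ :=
  if h : 1 ≤ i ∧ i ≤ a ∧ 1 ≤ j ∧ j ≤ b then
    (π ⟨i - 1, by omega⟩ ⟨j - 1, by omega⟩ : ℕ) else 0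

/-- The volume `|π| = Σ_{i,j} π_{i,j}`. -/
def ppVol {a b c : ℕ} (π : Fin a → Fin b → Fin (c+1)) : ℕ :=
  ∑ i : Fin a, ∑ j : Fin b, (π i j : ℕ)

/-- The trace `tr(π) = Σ_i π_{i,i}`. -/
def ppTr {a b c : ℕ} (π : Fin a → Fin b → Fin (c+1)) : ℕ :=
  ∑ i ∈ Finset.Icc 1 (min a b), pent π i i

/-- The set of corners of `π`: the triples `(i,j,k) ∈ D(π)` (1-based, so
`1 ≤ k ≤ π_{i,j}`) with `(i+1,j,k) ∉ D(π)` and `(i,j+1,k) ∉ D(π)`. -/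
def ppCor {a b c : ℕ} (π : Fin a → Fin b → Fin (c+1)) : Finset (ℕ × ℕ × ℕ) :=
  (Finset.Icc 1 a ×ˢ Finset.Icc 1 b ×ˢ Finset.Icc 1 c).filter
    (fun p => p.2.2 ≤ pent π p.1 p.2.1 ∧ pent π (p.1 + 1) p.2.1 < p.2.2 ∧
      pent π p.1 (p.2.1 + 1) < p.2.2)

/-- The corner-hook volume `|π|_{ch} = Σ_{(i,j,k) ∈ Cor(π)} (i+j-1)`. -/
def ppChVol {a b c : ℕ} (π : Fin a → Fin b → Fin (c+1)) : ℕ :=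
  ∑ p ∈ ppCor π, (p.1 + p.2.1 - 1)

/-- The finite set `PP(a,b,c)` of plane partitions with diagram in `[a]×[b]×[c]`. -/
def ppBox (a b c : ℕ) : Finset (Fin a → Fin b → Fin (c+1)) :=
  Finset.univ.filter (IsPP a b c)

namespace PPGrowth

/-- Partitions as sequences of parts (0-indexed). -/
abbrev Seq := ℕ → ℕ

def IsPart (f : Seq) : Prop := ∀ k, f (k+1) ≤ f k

/-- `Strip m l`: `m ⊆ l` and `l / m` is a horizontal strip. -/
def Strip (m l : Seq) : Prop := ∀ k, m k ≤ l k ∧ l (k+1) ≤ m k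

/-- A valid growth cell: `r` at the bottom-left corner, `m`, `n` at the two
adjacent corners, `l` at the top-right corner, `x` the matrix entry. -/
structure Cell (r m n l : Seq) (x : ℕ) : Prop where
  hr : IsPart r
  hm : IsPart m
  hn : IsPart n
  hl : IsPart l
  smr : Strip r m
  snr : Strip r n
  slm : Strip m l
  sln : Strip n l
  h0 : l 0 = x + max (m 0) (n 0)
  hk : ∀ k, l (k+1) + r k = max (m (k+1)) (n (k+1)) + min (m k) (n k)

def fwd (r m n : Seq) (x : ℕ) : Seq := fun k =>
  match k with
  | 0 => x + max (m 0) (n 0)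
  | k+1 => max (m (k+1)) (n (k+1)) + (min (m k) (n k) - r k)

def bwdr (l m n : Seq) : Seq := fun k =>
  max (m (k+1)) (n (k+1)) + (min (m k) (n k) - l (k+1))

def bwdx (l m n : Seq) : ℕ := l 0 - max (m 0) (n 0)

theorem fwd_cell {r m n : Seq} (x : ℕ) (hr : IsPart r) (hm : IsPart m) (hn : IsPart n)
    (smr : Strip r m) (snr : Strip r n) : Cell r m n (fwd r m n x) x := by
  constructor
  · exact hr
  · exact hm
  · exact hn
  · intro k
    cases k with
    | zero =>
      have h1 := smr 0; have h2 := snr 0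
      simp only [fwd]
      omega
    | succ k =>
      have h1 := smr k; have h2 := snr k; have h3 := smr (k+1); have h4 := snr (k+1)
      simp only [fwd]
      omega
  · exact smr
  · exact snr
  · intro k
    cases k with
    | zero =>
      have h1 := smr 0; have h2 := snr 0
      simp only [fwd]; omega
    | succ k =>
      have h1 := smr k; have h2 := snr k; have h3 := smr (k+1); have h4 := snr (k+1)
      simp only [fwd]; omega
  · intro k
    cases k with
    | zero =>
      have h1 := smr 0; have h2 := snr 0
      simp only [fwd]; omega
    | succ k =>
      have h1 := smr k; have h2 := snr k; have h3 := smr (k+1); have h4 := snr (k+1)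
      simp only [fwd]; omega
  · simp only [fwd]
  · intro k
    have h1 := smr k; have h2 := snr k
    simp only [fwd]; omega

theorem bwd_cell {l m n : Seq} (hm : IsPart m) (hn : IsPart n) (hl : IsPart l)
    (slm : Strip m l) (sln : Strip n l) : Cell (bwdr l m n) m n l (bwdx l m n) := by
  constructor
  · intro k
    have h1 := slm (k+1); have h2 := sln (k+1); have h3 := slm (k+1+1); have h4 := sln (k+1+1)
    have h5 := slm k; have h6 := sln k
    simp only [bwdr]; omega
  · exact hm
  · exact hn
  · exact hl
  · intro k
    have h1 := slm k; have h2 := sln k; have h3 := slm (k+1); have h4 := sln (k+1)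
    simp only [bwdr]; omega
  · intro k
    have h1 := slm k; have h2 := sln k; have h3 := slm (k+1); have h4 := sln (k+1)
    simp only [bwdr]; omega
  · exact slm
  · exact sln
  · have h1 := slm 0; have h2 := sln 0
    simp only [bwdx]; omega
  · intro k
    have h1 := slm k; have h2 := sln k; have h3 := slm (k+1); have h4 := sln (k+1)
    simp only [bwdr]; omega

theorem cell_r_eq {r m n l : Seq} {x : ℕ} (C : Cell r m n l x) : r = bwdr l m n := by
  funext k
  have h := C.hk k
  have h1 := C.slm (k+1); have h2 := C.sln (k+1); have h5 := C.slm k; have h6 := C.sln k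
  simp only [bwdr]; omega

theorem cell_x_eq {r m n l : Seq} {x : ℕ} (C : Cell r m n l x) : x = bwdx l m n := by
  have h := C.h0; simp only [bwdx]; omega

theorem cell_l_eq {r m n l : Seq} {x : ℕ} (C : Cell r m n l x) : l = fwd r m n x := by
  funext k
  cases k with
  | zero => simpa [fwd] using C.h0
  | succ k =>
    have h := C.hk k
    have h1 := C.smr k; have h2 := C.snr k
    simp only [fwd]; omega

theorem cell_partial_size {r m n l : Seq} {x : ℕ} (C : Cell r m n l x) (N : ℕ) :
    (∑ k ∈ Finset.range (N+1), l k) + ∑ k ∈ Finset.range N, r k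
      = x + (∑ k ∈ Finset.range (N+1), max (m k) (n k)) + ∑ k ∈ Finset.range N, min (m k) (n k) := by
  induction N with
  | zero => simpa [fwd] using C.h0
  | succ N ih =>
    rw [Finset.sum_range_succ (f := l), Finset.sum_range_succ (f := r),
      Finset.sum_range_succ (f := fun k => max (m k) (n k)),
      Finset.sum_range_succ (f := fun k => min (m k) (n k))]
    have h := C.hk N
    omega

theorem cell_size {r m n l : Seq} {x : ℕ} (C : Cell r m n l x) (K : ℕ)
    (hmK : m K = 0) (hnK : n K = 0) :
    (∑ k ∈ Finset.range (K+1), l k) + ∑ k ∈ Finset.range (K+1), r k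
      = x + (∑ k ∈ Finset.range (K+1), m k) + ∑ k ∈ Finset.range (K+1), n k := by
  have h := cell_partial_size C K
  have hrK : r K = 0 := by have := C.smr K; omega
  have hsum : (∑ k ∈ Finset.range (K+1), max (m k) (n k)) + ∑ k ∈ Finset.range K, min (m k) (n k)
      = (∑ k ∈ Finset.range (K+1), m k) + ∑ k ∈ Finset.range (K+1), n k := by
    rw [Finset.sum_range_succ (f := fun k => max (m k) (n k)),
      Finset.sum_range_succ (f := m), Finset.sum_range_succ (f := n)]
    rw [hmK, hnK]
    have : ∀ N : ℕ, (∑ k ∈ Finset.range N, max (m k) (n k)) + ∑ k ∈ Finset.range N, min (m k) (n k)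
        = (∑ k ∈ Finset.range N, m k) + ∑ k ∈ Finset.range N, n k := by
      intro N
      induction N with
      | zero => simp
      | succ N ih =>
        rw [Finset.sum_range_succ, Finset.sum_range_succ, Finset.sum_range_succ,
          Finset.sum_range_succ]
        omega
    have := this K
    omega
  rw [Finset.sum_range_succ (f := r), hrK]
  omega

/-- The growth diagram generated by the matrix `A` (1-based entries). -/
def grow (A : ℕ → ℕ → ℕ) : ℕ → ℕ → Seq
  | 0, _ => fun _ => 0
  | _+1, 0 => fun _ => 0
  | i+1, j+1 => fwd (grow A i j) (grow A i (j+1)) (grow A (i+1) j) (A (i+1) (j+1))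
termination_by i j => (i, j)

theorem grid_ind (P : ℕ → ℕ → Prop)
    (h : ∀ i j, (∀ i' j', i' + j' < i + j → P i' j') → P i j) : ∀ i j, P i j := by
  have key : ∀ n i j, i + j ≤ n → P i j := by
    intro n
    induction n with
    | zero => intro i j hij; exact h i j (fun i' j' h' => absurd h' (by omega))
    | succ n ih =>
      intro i j hij
      exact h i j (fun i' j' h' => ih i' j' (by omega))
  exact fun i j => key (i+j) i j le_rfl

theorem grow_zero_left (A : ℕ → ℕ → ℕ) (j : ℕ) : grow A 0 j = fun _ => 0 := by
  simp [grow]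

theorem grow_zero_right (A : ℕ → ℕ → ℕ) (i : ℕ) : grow A i 0 = fun _ => 0 := by
  cases i <;> simp [grow]

theorem grow_succ (A : ℕ → ℕ → ℕ) (i j : ℕ) :
    grow A (i+1) (j+1) = fwd (grow A i j) (grow A i (j+1)) (grow A (i+1) j) (A (i+1) (j+1)) := by
  simp [grow]


/-- Parts beyond `min i j` vanish. -/
theorem grow_partBound (A : ℕ → ℕ → ℕ) : ∀ i j, ∀ k, min i j ≤ k → grow A i j k = 0 := by
  refine grid_ind _ (fun i j IH => ?_)
  match i, j with
  | 0, j => intro k hk; rw [grow_zero_left]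
  | i+1, 0 => intro k hk; rw [grow_zero_right]
  | i+1, j+1 =>
    intro k hk
    rw [grow_succ]
    match k, hk with
    | 0, hk => exact absurd hk (by omega)
    | k+1, hk =>
      have hm : grow A i (j+1) (k+1) = 0 := IH i (j+1) (by omega) (k+1) (by omega)
      have hn : grow A (i+1) j (k+1) = 0 := IH (i+1) j (by omega) (k+1) (by omega)
      have hmin : min (grow A i (j+1) k) (grow A (i+1) j k) = 0 := by
        rcases Nat.le_total i j with h | h
        · have : grow A i (j+1) k = 0 := IH i (j+1) (by omega) k (by omega)
          omega
        · have : grow A (i+1) j k = 0 := IH (i+1) j (by omega) k (by omega)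
          omega
      simp only [fwd]
      omega

/-- Main forward invariant: every `grow` label is a partition, and consecutive
labels along grid edges form horizontal strips. -/
theorem grow_inv (A : ℕ → ℕ → ℕ) : ∀ i j,
    IsPart (grow A i j) ∧
    (∀ i', i = i' + 1 → Strip (grow A i' j) (grow A i j)) ∧
    (∀ j', j = j' + 1 → Strip (grow A i j') (grow A i j)) := by
  refine grid_ind _ (fun i j IH => ?_)
  match i, j with
  | 0, j =>
    refine ⟨by intro k; simp [grow_zero_left], by rintro i' ⟨⟩, ?_⟩
    rintro j' rfl
    intro k; simp [grow_zero_left]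
  | i+1, 0 =>
    refine ⟨by intro k; simp [grow_zero_right], ?_, by rintro j' ⟨⟩⟩
    intro i' hi
    obtain rfl : i' = i := by omega
    intro k; simp [grow_zero_right]
  | i+1, j+1 =>
    have hr : IsPart (grow A i j) := (IH i j (by omega)).1
    have hm : IsPart (grow A i (j+1)) := (IH i (j+1) (by omega)).1
    have hn : IsPart (grow A (i+1) j) := (IH (i+1) j (by omega)).1
    have smr : Strip (grow A i j) (grow A i (j+1)) := (IH i (j+1) (by omega)).2.2 j rfl
    have snr : Strip (grow A i j) (grow A (i+1) j) := (IH (i+1) j (by omega)).2.1 i rfl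
    have C := fwd_cell (r := grow A i j) (m := grow A i (j+1)) (n := grow A (i+1) j)
      (A (i+1) (j+1)) hr hm hn smr snr
    rw [grow_succ]
    refine ⟨C.hl, ?_, ?_⟩
    · intro i' hi; obtain rfl : i' = i := by omega
      exact C.slm
    · intro j' hj; obtain rfl : j' = j := by omega
      exact C.sln

theorem grow_isPart (A : ℕ → ℕ → ℕ) (i j : ℕ) : IsPart (grow A i j) := (grow_inv A i j).1

theorem grow_stripV (A : ℕ → ℕ → ℕ) (i j : ℕ) :
    Strip (grow A i j) (grow A (i+1) j) := (grow_inv A (i+1) j).2.1 i rfl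

theorem grow_stripH (A : ℕ → ℕ → ℕ) (i j : ℕ) :
    Strip (grow A i j) (grow A i (j+1)) := (grow_inv A i (j+1)).2.2 j rfl

theorem grow_cell (A : ℕ → ℕ → ℕ) (i j : ℕ) :
    Cell (grow A i j) (grow A i (j+1)) (grow A (i+1) j) (grow A (i+1) (j+1)) (A (i+1) (j+1)) := by
  rw [grow_succ]
  exact fwd_cell _ (grow_isPart A i j) (grow_isPart A i (j+1)) (grow_isPart A (i+1) j)
    (grow_stripH A i j) (grow_stripV A i j)


theorem isPart_le_zero {f : Seq} (hf : IsPart f) : ∀ k, f k ≤ f 0 := by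
  intro k
  induction k with
  | zero => exact le_rfl
  | succ k ih => exact le_trans (hf k) ih

theorem grow_zero_mono (A : ℕ → ℕ → ℕ) {i i' j j' : ℕ} (hi : i ≤ i') (hj : j ≤ j') :
    grow A i j 0 ≤ grow A i' j' 0 := by
  have h1 : ∀ d, grow A i j 0 ≤ grow A (i + d) j 0 := by
    intro d
    induction d with
    | zero => exact le_rfl
    | succ d ih => exact le_trans ih ((grow_stripV A (i+d) j 0).1)
  have h2 : ∀ d, grow A i' j 0 ≤ grow A i' (j + d) 0 := by
    intro d
    induction d with
    | zero => exact le_rfl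
    | succ d ih => exact le_trans ih ((grow_stripH A i' (j+d) 0).1)
  calc grow A i j 0 ≤ grow A (i + (i' - i)) j 0 := h1 _
    _ = grow A i' j 0 := by congr 1; omega
    _ ≤ grow A i' (j + (j' - j)) 0 := h2 _
    _ = grow A i' j' 0 := by congr 1; omega

def gsz (A : ℕ → ℕ → ℕ) (N i j : ℕ) : ℕ := ∑ k ∈ Finset.range N, grow A i j k

def boxSum (A : ℕ → ℕ → ℕ) (i j : ℕ) : ℕ :=
  ∑ x ∈ Finset.range i, ∑ y ∈ Finset.range j, A (x+1) (y+1)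

theorem gsz_rec (A : ℕ → ℕ → ℕ) (K i j : ℕ) (hi : i ≤ K) (hj : j ≤ K) :
    gsz A (K+1) (i+1) (j+1) + gsz A (K+1) i j
      = A (i+1) (j+1) + gsz A (K+1) i (j+1) + gsz A (K+1) (i+1) j := by
  have C := grow_cell A i j
  have h := cell_size C K (grow_partBound A i (j+1) K (by omega))
    (grow_partBound A (i+1) j K (by omega))
  unfold gsz
  omega

theorem boxSum_rec (A : ℕ → ℕ → ℕ) (i j : ℕ) :
    boxSum A (i+1) (j+1) + boxSum A i j
      = A (i+1) (j+1) + boxSum A i (j+1) + boxSum A (i+1) j := by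
  unfold boxSum
  rw [Finset.sum_range_succ (f := fun x => ∑ y ∈ Finset.range (j+1), A (x+1) (y+1)),
    Finset.sum_range_succ (f := fun x => ∑ y ∈ Finset.range j, A (x+1) (y+1)),
    Finset.sum_range_succ (f := fun y => A (i+1) (y+1))]
  omega

theorem gsz_eq_boxSum (A : ℕ → ℕ → ℕ) (K : ℕ) :
    ∀ i j, i ≤ K → j ≤ K → gsz A (K+1) i j = boxSum A i j := by
  refine grid_ind _ (fun i j IH => ?_)
  match i, j with
  | 0, j =>
    intro _ _
    simp [gsz, boxSum, grow_zero_left]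
  | i+1, 0 =>
    intro _ _
    simp [gsz, boxSum, grow_zero_right]
  | i+1, j+1 =>
    intro hi hj
    have h1 := gsz_rec A K i j (by omega) (by omega)
    have h2 := boxSum_rec A i j
    have e1 := IH i j (by omega) (by omega) (by omega)
    have e2 := IH i (j+1) (by omega) (by omega) (by omega)
    have e3 := IH (i+1) j (by omega) (by omega) (by omega)
    omega

theorem weighted_rows (A : ℕ → ℕ → ℕ) (b : ℕ) :
    ∀ a, ∑ x ∈ Finset.range a, boxSum A (x+1) b
      = ∑ x ∈ Finset.range a, ∑ y ∈ Finset.range b, (a - x) * A (x+1) (y+1) := by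
  intro a
  induction a with
  | zero => simp
  | succ a ih =>
    rw [Finset.sum_range_succ (f := fun x => boxSum A (x+1) b), ih,
      Finset.sum_range_succ (f := fun x => ∑ y ∈ Finset.range b, (a + 1 - x) * A (x+1) (y+1))]
    have h1 : ∀ x ∈ Finset.range a,
        ∑ y ∈ Finset.range b, (a + 1 - x) * A (x+1) (y+1)
          = (∑ y ∈ Finset.range b, (a - x) * A (x+1) (y+1))
            + ∑ y ∈ Finset.range b, A (x+1) (y+1) := by
      intro x hx
      rw [← Finset.sum_add_distrib]
      refine Finset.sum_congr rfl (fun y _ => ?_)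
      have hxa : x < a := Finset.mem_range.mp hx
      have : a + 1 - x = (a - x) + 1 := by omega
      rw [this, add_mul, one_mul]
    rw [Finset.sum_congr rfl h1, Finset.sum_add_distrib]
    have h2 : ∑ y ∈ Finset.range b, (a + 1 - a) * A (a+1) (y+1)
        = ∑ y ∈ Finset.range b, A (a+1) (y+1) := by
      refine Finset.sum_congr rfl (fun y _ => ?_)
      have : a + 1 - a = 1 := by omega
      rw [this, one_mul]
    rw [h2]
    unfold boxSum
    rw [Finset.sum_range_succ (f := fun x => ∑ y ∈ Finset.range b, A (x+1) (y+1))]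
    ring

theorem weighted_cols (A : ℕ → ℕ → ℕ) (a : ℕ) :
    ∀ m, ∑ y ∈ Finset.range m, boxSum A a (y+1)
      = ∑ x ∈ Finset.range a, ∑ y ∈ Finset.range m, (m - y) * A (x+1) (y+1) := by
  intro m
  induction m with
  | zero => simp
  | succ m ih =>
    rw [Finset.sum_range_succ (f := fun y => boxSum A a (y+1)), ih]
    have hrhs : ∀ x ∈ Finset.range a,
        ∑ y ∈ Finset.range (m+1), (m + 1 - y) * A (x+1) (y+1)
          = ((∑ y ∈ Finset.range m, (m - y) * A (x+1) (y+1))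
            + ∑ y ∈ Finset.range m, A (x+1) (y+1)) + A (x+1) (m+1) := by
      intro x hx
      rw [Finset.sum_range_succ (f := fun y => (m + 1 - y) * A (x+1) (y+1))]
      have : m + 1 - m = 1 := by omega
      rw [this, one_mul]
      congr 1
      rw [← Finset.sum_add_distrib]
      refine Finset.sum_congr rfl (fun y hy => ?_)
      have hym : y < m := Finset.mem_range.mp hy
      have : m + 1 - y = (m - y) + 1 := by omega
      rw [this, add_mul, one_mul]
    rw [Finset.sum_congr rfl hrhs]
    rw [Finset.sum_add_distrib, Finset.sum_add_distrib]
    unfold boxSum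
    rw [Finset.sum_comm (s := Finset.range a) (t := Finset.range (m+1))
      (f := fun x y => A (x+1) (y+1))]
    rw [Finset.sum_range_succ (f := fun y => ∑ x ∈ Finset.range a, A (x+1) (y+1))]
    rw [Finset.sum_comm (s := Finset.range m) (t := Finset.range a)
      (f := fun y x => A (x+1) (y+1))]
    ring


theorem boundary_weight (A : ℕ → ℕ → ℕ) (a b : ℕ) (hb : 1 ≤ b) :
    (∑ x ∈ Finset.range a, boxSum A (x+1) b) + (∑ y ∈ Finset.range (b-1), boxSum A a (y+1))
      = ∑ x ∈ Finset.range a, ∑ y ∈ Finset.range b, (a + b - 1 - x - y) * A (x+1) (y+1) := by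
  rw [weighted_rows, weighted_cols]
  have hext : ∀ x ∈ Finset.range a,
      ∑ y ∈ Finset.range (b-1), (b - 1 - y) * A (x+1) (y+1)
        = ∑ y ∈ Finset.range b, (b - 1 - y) * A (x+1) (y+1) := by
    intro x _
    have : b = (b-1) + 1 := by omega
    rw [this, Finset.sum_range_succ (f := fun y => ((b-1) + 1 - 1 - y) * A (x+1) (y+1))]
    simp
  rw [← Finset.sum_add_distrib]
  refine Finset.sum_congr rfl (fun x hx => ?_)
  rw [hext x hx, ← Finset.sum_add_distrib]
  refine Finset.sum_congr rfl (fun y hy => ?_)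
  have hxa := Finset.mem_range.mp hx
  have hyb := Finset.mem_range.mp hy
  have h1 : a - x + (b - 1 - y) = a + b - 1 - x - y := by omega
  rw [← h1, add_mul]

end PPGrowth


namespace PPGrowth

variable {a b c : ℕ}

/-- 1-based padded entries of an array. -/
def aent {a b c : ℕ} (A : Fin a → Fin b → Fin (c+1)) (i j : ℕ) : ℕ :=
  if h : 1 ≤ i ∧ i ≤ a ∧ 1 ≤ j ∧ j ≤ b then
    (A ⟨i - 1, by omega⟩ ⟨j - 1, by omega⟩ : ℕ) else 0

/-- Arrays with max-path sum at most `c`. -/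
def arrBox (a b c : ℕ) : Finset (Fin a → Fin b → Fin (c+1)) :=
  Finset.univ.filter (fun A => grow (aent A) a b 0 ≤ c)

theorem pent_le {π : Fin a → Fin b → Fin (c+1)} (i j : ℕ) : pent π i j ≤ c := by
  unfold pent
  split
  · exact Nat.lt_succ_iff.mp (Fin.is_lt _)
  · omega

theorem pent_row {π : Fin a → Fin b → Fin (c+1)} (hπ : IsPP a b c π) (i j : ℕ) (hi : 1 ≤ i) :
    pent π (i+1) j ≤ pent π i j := by
  unfold pent
  split
  · rename_i h1
    have h2 : 1 ≤ i ∧ i ≤ a ∧ 1 ≤ j ∧ j ≤ b := by omega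
    rw [dif_pos h2]
    exact hπ.1 ⟨i-1, by omega⟩ ⟨i+1-1, by omega⟩ ⟨j-1, by omega⟩ (by simp only [Fin.le_def]; omega)
  · omega

theorem pent_col {π : Fin a → Fin b → Fin (c+1)} (hπ : IsPP a b c π) (i j : ℕ) (hj : 1 ≤ j) :
    pent π i (j+1) ≤ pent π i j := by
  unfold pent
  split
  · rename_i h1
    have h2 : 1 ≤ i ∧ i ≤ a ∧ 1 ≤ j ∧ j ≤ b := by omega
    rw [dif_pos h2]
    exact hπ.2 ⟨i-1, by omega⟩ ⟨j-1, by omega⟩ ⟨j+1-1, by omega⟩ (by simp only [Fin.le_def]; omega)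
  · omega

/-- The (180°-rotated) corner array of a boxed plane partition. -/
def cornerA (π : Fin a → Fin b → Fin (c+1)) (i j : ℕ) : ℕ :=
  pent π (a+1-i) (b+1-j) - max (pent π (a+2-i) (b+1-j)) (pent π (a+1-i) (b+2-j))

theorem cornerA_le (π : Fin a → Fin b → Fin (c+1)) (i j : ℕ) : cornerA π i j ≤ c :=
  le_trans (Nat.sub_le _ _) (pent_le _ _)

def toArr (π : Fin a → Fin b → Fin (c+1)) : Fin a → Fin b → Fin (c+1) :=
  fun i j => ⟨cornerA π (i.val+1) (j.val+1), Nat.lt_succ_of_le (cornerA_le π _ _)⟩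

def fromArr (A : Fin a → Fin b → Fin (c+1)) : Fin a → Fin b → Fin (c+1) :=
  fun i j => ⟨min (grow (aent A) (a - i.val) (b - j.val) 0) c,
    Nat.lt_succ_of_le (min_le_right _ _)⟩

theorem aent_toArr (π : Fin a → Fin b → Fin (c+1)) (i j : ℕ)
    (h : 1 ≤ i ∧ i ≤ a ∧ 1 ≤ j ∧ j ≤ b) :
    aent (toArr π) i j = cornerA π i j := by
  unfold aent
  rw [dif_pos h]
  show cornerA π (i - 1 + 1) (j - 1 + 1) = cornerA π i j
  congr 1 <;> omega

/-- Key identity: the growth of the rotated corner array recovers the entries of `π`. -/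
theorem grow_toArr (π : Fin a → Fin b → Fin (c+1)) (hπ : IsPP a b c π) :
    ∀ i j, i ≤ a → j ≤ b → grow (aent (toArr π)) i j 0 = pent π (a+1-i) (b+1-j) := by
  refine grid_ind _ (fun i j IH => ?_)
  match i, j with
  | 0, j =>
    intro _ _
    rw [grow_zero_left]
    unfold pent
    rw [dif_neg (by omega)]
  | i+1, 0 =>
    intro _ _
    rw [grow_zero_right]
    unfold pent
    rw [dif_neg (by omega)]
  | i+1, j+1 =>
    intro hi hj
    rw [grow_succ]
    show aent (toArr π) (i+1) (j+1) + max (grow (aent (toArr π)) i (j+1) 0)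
      (grow (aent (toArr π)) (i+1) j 0) = _
    rw [aent_toArr π (i+1) (j+1) (by omega)]
    rw [IH i (j+1) (by omega) (by omega) (by omega), IH (i+1) j (by omega) (by omega) (by omega)]
    unfold cornerA
    have e1 : a + 1 - (i+1) = a - i := by omega
    have e2 : b + 1 - (j+1) = b - j := by omega
    have e3 : a + 2 - (i+1) = a + 1 - i := by omega
    have e4 : b + 2 - (j+1) = b + 1 - j := by omega
    rw [e1, e2, e3, e4]
    have h1 : pent π (a - i + 1) (b - j) ≤ pent π (a - i) (b - j) :=
      pent_row hπ _ _ (by omega)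
    have h2 : pent π (a - i) (b - j + 1) ≤ pent π (a - i) (b - j) :=
      pent_col hπ _ _ (by omega)
    have e5 : a + 1 - i = (a - i) + 1 := by omega
    have e6 : b + 1 - j = (b - j) + 1 := by omega
    rw [e5, e6]
    omega


theorem pent_fromArr (A : Fin a → Fin b → Fin (c+1)) (hA : grow (aent A) a b 0 ≤ c)
    (i j : ℕ) (hi1 : 1 ≤ i) (hj1 : 1 ≤ j) (hi2 : i ≤ a+1) (hj2 : j ≤ b+1) :
    pent (fromArr A) i j = grow (aent A) (a+1-i) (b+1-j) 0 := by
  by_cases h : i ≤ a ∧ j ≤ b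
  · unfold pent
    rw [dif_pos (by omega)]
    show min (grow (aent A) (a - (i-1)) (b - (j-1)) 0) c = _
    have e1 : a - (i-1) = a+1-i := by omega
    have e2 : b - (j-1) = b+1-j := by omega
    rw [e1, e2]
    exact min_eq_left (le_trans (grow_zero_mono _ (by omega) (by omega)) hA)
  · unfold pent
    rw [dif_neg (by omega)]
    rcases Nat.lt_or_ge a i with h' | h'
    · have : a + 1 - i = 0 := by omega
      rw [this, grow_zero_left]
    · have : b + 1 - j = 0 := by omega
      rw [this, grow_zero_right]

theorem fromArr_isPP (A : Fin a → Fin b → Fin (c+1)) : IsPP a b c (fromArr A) := by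
  constructor
  · intro i i' j hii
    show min (grow (aent A) (a - i'.val) (b - j.val) 0) c ≤ _
    exact min_le_min_right c (grow_zero_mono _ (by omega) le_rfl)
  · intro i j j' hjj
    show min (grow (aent A) (a - i.val) (b - j'.val) 0) c ≤ _
    exact min_le_min_right c (grow_zero_mono _ le_rfl (by omega))

theorem fromArr_mem (A : Fin a → Fin b → Fin (c+1)) : fromArr A ∈ ppBox a b c :=
  Finset.mem_filter.mpr ⟨Finset.mem_univ _, fromArr_isPP A⟩

theorem toArr_mem (π : Fin a → Fin b → Fin (c+1)) (hπ : IsPP a b c π) :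
    toArr π ∈ arrBox a b c := by
  refine Finset.mem_filter.mpr ⟨Finset.mem_univ _, ?_⟩
  rw [grow_toArr π hπ a b le_rfl le_rfl]
  exact pent_le _ _

theorem toArr_fromArr (A : Fin a → Fin b → Fin (c+1)) (hA : grow (aent A) a b 0 ≤ c) :
    toArr (fromArr A) = A := by
  funext i j
  apply Fin.ext
  show cornerA (fromArr A) (i.val+1) (j.val+1) = (A i j : ℕ)
  unfold cornerA
  have e1 : a + 1 - (i.val+1) = a - i.val := by omega
  have e2 : b + 1 - (j.val+1) = b - j.val := by omega
  have e3 : a + 2 - (i.val+1) = a + 1 - i.val := by omega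
  have e4 : b + 2 - (j.val+1) = b + 1 - j.val := by omega
  rw [e1, e2, e3, e4]
  rw [pent_fromArr A hA (a - i.val) (b - j.val) (by omega) (by omega) (by omega) (by omega)]
  rw [pent_fromArr A hA (a + 1 - i.val) (b - j.val) (by omega) (by omega) (by omega) (by omega)]
  rw [pent_fromArr A hA (a - i.val) (b + 1 - j.val) (by omega) (by omega) (by omega) (by omega)]
  have e5 : a + 1 - (a - i.val) = i.val + 1 := by omega
  have e6 : b + 1 - (b - j.val) = j.val + 1 := by omega
  have e7 : a + 1 - (a + 1 - i.val) = i.val := by omega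
  have e8 : b + 1 - (b + 1 - j.val) = j.val := by omega
  rw [e5, e6, e7, e8]
  rw [grow_succ]
  show aent A (i.val+1) (j.val+1) + max (grow (aent A) i.val (j.val+1) 0)
      (grow (aent A) (i.val+1) j.val 0) - _ = _
  have : aent A (i.val+1) (j.val+1) = (A i j : ℕ) := by
    unfold aent
    rw [dif_pos (by omega)]
    congr 1 <;> apply Fin.ext <;> simp
  omega

theorem fromArr_toArr (π : Fin a → Fin b → Fin (c+1)) (hπ : IsPP a b c π) :
    fromArr (toArr π) = π := by
  funext i j
  apply Fin.ext
  show min (grow (aent (toArr π)) (a - i.val) (b - j.val) 0) c = (π i j : ℕ)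
  rw [grow_toArr π hπ _ _ (by omega) (by omega)]
  have e5 : a + 1 - (a - i.val) = i.val + 1 := by omega
  have e6 : b + 1 - (b - j.val) = j.val + 1 := by omega
  rw [e5, e6]
  have : pent π (i.val+1) (j.val+1) = (π i j : ℕ) := by
    unfold pent
    rw [dif_pos (by omega)]
    congr 1 <;> apply Fin.ext <;> simp
  rw [this]
  exact min_eq_left (Nat.lt_succ_iff.mp (Fin.is_lt _))


/-- Count of corner heights over a single cell. -/
theorem count_cell (X Y Z w : ℕ) (hY : Y ≤ X) (hZ : Z ≤ X) (hXc : X ≤ c) :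
    ∑ k ∈ Finset.Icc 1 c, (if k ≤ X ∧ Y < k ∧ Z < k then w else 0)
      = w * (X - max Y Z) := by
  have h1 : ∀ k ∈ Finset.Icc 1 c, (if k ≤ X ∧ Y < k ∧ Z < k then w else 0)
      = w * (if k ∈ Finset.Ioc (max Y Z) X then 1 else 0) := by
    intro k hk
    by_cases h : k ≤ X ∧ Y < k ∧ Z < k
    · rw [if_pos h, if_pos (Finset.mem_Ioc.mpr (by omega)), mul_one]
    · rw [if_neg h, if_neg (fun hc => h (by have := Finset.mem_Ioc.mp hc; omega)), mul_zero]
  rw [Finset.sum_congr rfl h1, ← Finset.mul_sum]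
  congr 1
  rw [Finset.sum_ite_mem, Finset.sum_const, smul_eq_mul, mul_one]
  have : Finset.Icc 1 c ∩ Finset.Ioc (max Y Z) X = Finset.Ioc (max Y Z) X := by
    apply Finset.inter_eq_right.mpr
    intro k hk
    rw [Finset.mem_Ioc] at hk
    rw [Finset.mem_Icc]
    omega
  rw [this, Nat.card_Ioc]

/-- Weighted sums over the corner set as per-cell sums. -/
theorem ppCor_weighted (π : Fin a → Fin b → Fin (c+1)) (hπ : IsPP a b c π) (W : ℕ → ℕ → ℕ) :
    ∑ p ∈ ppCor π, W p.1 p.2.1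
      = ∑ i ∈ Finset.Icc 1 a, ∑ j ∈ Finset.Icc 1 b,
          W i j * (pent π i j - max (pent π (i+1) j) (pent π i (j+1))) := by
  unfold ppCor
  rw [Finset.sum_filter, Finset.sum_product]
  refine Finset.sum_congr rfl (fun i hi => ?_)
  rw [Finset.sum_product]
  refine Finset.sum_congr rfl (fun j hj => ?_)
  rw [Finset.mem_Icc] at hi hj
  have := count_cell (c := c) (pent π i j) (pent π (i+1) j) (pent π i (j+1)) (W i j)
    (pent_row hπ i j (by omega)) (pent_col hπ i j (by omega)) (pent_le _ _)
  convert this using 2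

theorem icc_to_range {M : Type*} [AddCommMonoid M] (n : ℕ) (f : ℕ → M) :
    ∑ i ∈ Finset.Icc 1 n, f i = ∑ x ∈ Finset.range n, f (x+1) := by
  rw [← Finset.Ico_add_one_right_eq_Icc, Finset.sum_Ico_eq_sum_range]
  have : n + 1 - 1 = n := by omega
  rw [this]
  exact Finset.sum_congr rfl (fun x _ => by rw [Nat.add_comm 1 x])

/-- Shift and reflect: sums over `Icc 1 a × Icc 1 b` of the corner statistic become
sums of the rotated corner array. -/
theorem corner_sum_reflect (π : Fin a → Fin b → Fin (c+1)) (W : ℕ → ℕ → ℕ) :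
    ∑ i ∈ Finset.Icc 1 a, ∑ j ∈ Finset.Icc 1 b,
        W i j * (pent π i j - max (pent π (i+1) j) (pent π i (j+1)))
      = ∑ x ∈ Finset.range a, ∑ y ∈ Finset.range b,
          W (a - x) (b - y) * aent (toArr π) (x+1) (y+1) := by
  have key : ∀ x y, x < a → y < b →
      W (a - x) (b - y) * aent (toArr π) (x+1) (y+1)
        = W (a - x) (b - y) * (pent π (a-x) (b-y)
            - max (pent π (a-x+1) (b-y)) (pent π (a-x) (b-y+1))) := by
    intro x y hx hy
    rw [aent_toArr π (x+1) (y+1) (by omega)]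
    unfold cornerA
    have e1 : a + 1 - (x+1) = a - x := by omega
    have e2 : b + 1 - (y+1) = b - y := by omega
    have e3 : a + 2 - (x+1) = a - x + 1 := by omega
    have e4 : b + 2 - (y+1) = b - y + 1 := by omega
    rw [e1, e2, e3, e4]
  rw [icc_to_range]
  have inner : ∀ i, ∑ j ∈ Finset.Icc 1 b,
      W i j * (pent π i j - max (pent π (i+1) j) (pent π i (j+1)))
        = ∑ y ∈ Finset.range b, W i (y+1)
            * (pent π i (y+1) - max (pent π (i+1) (y+1)) (pent π i (y+1+1))) := by
    intro i; exact icc_to_range b _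
  rw [Finset.sum_congr rfl (fun x _ => inner (x+1))]
  rw [← Finset.sum_range_reflect (fun x => ∑ y ∈ Finset.range b,
    W (x+1) (y+1) * (pent π (x+1) (y+1)
      - max (pent π (x+1+1) (y+1)) (pent π (x+1) (y+1+1)))) a]
  refine Finset.sum_congr rfl (fun x hx => ?_)
  rw [← Finset.sum_range_reflect (fun y =>
    W ((a-1-x)+1) (y+1) * (pent π ((a-1-x)+1) (y+1)
      - max (pent π ((a-1-x)+1+1) (y+1)) (pent π ((a-1-x)+1) (y+1+1)))) b]
  refine Finset.sum_congr rfl (fun y hy => ?_)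
  rw [Finset.mem_range] at hx hy
  have ex : a - 1 - x + 1 = a - x := by omega
  have ey : b - 1 - y + 1 = b - y := by omega
  rw [ex, ey]
  exact (key x y hx hy).symm


/-! ### The growth-diagram side -/

/-- Plane partition assembled from the boundary of the growth diagram of `A`:
the `(i,j)` entry (0-based) is part `min i j` of the boundary label on the
diagonal through `(i,j)`. -/
def toPP (A : Fin a → Fin b → Fin (c+1)) : Fin a → Fin b → Fin (c+1) :=
  fun i j =>
    ⟨min (grow (aent A) (a - (i.val - min i.val j.val)) (b - (j.val - min i.val j.val))
      (min i.val j.val)) c, Nat.lt_succ_of_le (min_le_right _ _)⟩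

theorem grow_le_c {A : Fin a → Fin b → Fin (c+1)} (hA : grow (aent A) a b 0 ≤ c)
    {i j : ℕ} (hi : i ≤ a) (hj : j ≤ b) (k : ℕ) : grow (aent A) i j k ≤ c :=
  le_trans (isPart_le_zero (grow_isPart _ i j) k) (le_trans (grow_zero_mono _ hi hj) hA)

theorem pent_toPP {A : Fin a → Fin b → Fin (c+1)} (hA : grow (aent A) a b 0 ≤ c)
    (i j : ℕ) (h : 1 ≤ i ∧ i ≤ a ∧ 1 ≤ j ∧ j ≤ b) :
    pent (toPP A) i j
      = grow (aent A) (a - (i - 1 - min (i-1) (j-1))) (b - (j - 1 - min (i-1) (j-1)))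
          (min (i-1) (j-1)) := by
  unfold pent
  rw [dif_pos h]
  show min (grow (aent A) _ _ _) c = _
  exact min_eq_left (grow_le_c hA (by omega) (by omega) _)

theorem toPP_entry (A : Fin a → Fin b → Fin (c+1)) (i : Fin a) (j : Fin b) :
    (toPP A i j : ℕ)
      = min (grow (aent A) (a - (i.val - min i.val j.val)) (b - (j.val - min i.val j.val))
          (min i.val j.val)) c := rfl

theorem toPP_row_adj (A : Fin a → Fin b → Fin (c+1)) (u v : ℕ) (hu : u + 1 < a) (hv : v < b) :
    (toPP A ⟨u+1, hu⟩ ⟨v, hv⟩ : ℕ) ≤ (toPP A ⟨u, by omega⟩ ⟨v, hv⟩ : ℕ) := by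
  rw [toPP_entry, toPP_entry]
  refine min_le_min_right c ?_
  simp only
  rcases Nat.lt_trichotomy v (u+1) with h | h | h
  · -- v ≤ u : both diagonals below the main one
    have e1 : min (u+1) v = v := by omega
    have e2 : min u v = v := by omega
    rw [e1, e2]
    have e3 : b - (v - v) = b := by omega
    rw [e3]
    have e4 : a - (u + 1 - v) = (a - (u - v)) - 1 := by omega
    rw [e4]
    have e5 : (a - (u - v)) - 1 + 1 = a - (u - v) := by omega
    have := (grow_stripV (aent A) ((a - (u - v)) - 1) b v).1
    rw [e5] at this
    exact this
  · -- v = u + 1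
    subst h
    have e1 : min (u+1) (u+1) = u+1 := by omega
    have e2 : min u (u+1) = u := by omega
    rw [e1, e2]
    have e3 : a - (u + 1 - (u+1)) = a := by omega
    have e4 : b - (u + 1 - (u+1)) = b := by omega
    have e5 : a - (u - u) = a := by omega
    rw [e3, e4, e5]
    have e6 : b - (u + 1 - u) = b - 1 := by omega
    rw [e6]
    have := (grow_stripH (aent A) a (b-1) u).2
    have e7 : b - 1 + 1 = b := by omega
    rw [e7] at this
    exact this
  · -- v > u + 1
    have e1 : min (u+1) v = u+1 := by omega
    have e2 : min u v = u := by omega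
    rw [e1, e2]
    have e3 : a - (u + 1 - (u+1)) = a := by omega
    have e4 : a - (u - u) = a := by omega
    rw [e3, e4]
    rcases Nat.le_total (v - u) b with hvb | hvb
    · have e5 : b - (v - (u+1)) = (b - (v - u)) + 1 := by omega
      rw [e5]
      exact (grow_stripH (aent A) a (b - (v - u)) u).2
    · have e5 : b - (v - (u+1)) = 0 := by omega
      rw [e5, grow_zero_right]
      exact Nat.zero_le _

theorem toPP_col_adj (A : Fin a → Fin b → Fin (c+1)) (u v : ℕ) (hu : u < a) (hv : v + 1 < b) :
    (toPP A ⟨u, hu⟩ ⟨v+1, hv⟩ : ℕ) ≤ (toPP A ⟨u, hu⟩ ⟨v, by omega⟩ : ℕ) := by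
  rw [toPP_entry, toPP_entry]
  refine min_le_min_right c ?_
  simp only
  rcases Nat.lt_trichotomy u (v+1) with h | h | h
  · have e1 : min u (v+1) = u := by omega
    have e2 : min u v = u := by omega
    rw [e1, e2]
    have e3 : a - (u - u) = a := by omega
    rw [e3]
    have e4 : b - (v + 1 - u) = (b - (v - u)) - 1 := by omega
    rw [e4]
    have e5 : (b - (v - u)) - 1 + 1 = b - (v - u) := by omega
    have := (grow_stripH (aent A) a ((b - (v - u)) - 1) u).1
    rw [e5] at this
    exact this
  · subst h
    have e1 : min (v+1) (v+1) = v+1 := by omega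
    have e2 : min (v+1) v = v := by omega
    rw [e1, e2]
    have e3 : a - (v + 1 - (v+1)) = a := by omega
    have e4 : b - (v + 1 - (v+1)) = b := by omega
    have e5 : b - (v - v) = b := by omega
    rw [e3, e4, e5]
    have e6 : a - (v + 1 - v) = a - 1 := by omega
    rw [e6]
    have := (grow_stripV (aent A) (a-1) b v).2
    have e7 : a - 1 + 1 = a := by omega
    rw [e7] at this
    exact this
  · have e1 : min u (v+1) = v+1 := by omega
    have e2 : min u v = v := by omega
    rw [e1, e2]
    have e3 : b - (v + 1 - (v+1)) = b := by omega
    have e4 : b - (v - v) = b := by omega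
    rw [e3, e4]
    rcases Nat.le_total (u - v) a with hua | hua
    · have e5 : a - (u - (v+1)) = (a - (u - v)) + 1 := by omega
      rw [e5]
      exact (grow_stripV (aent A) (a - (u - v)) b v).2
    · have e5 : a - (u - (v+1)) = 0 := by omega
      rw [e5, grow_zero_left]
      exact Nat.zero_le _

theorem toPP_isPP (A : Fin a → Fin b → Fin (c+1)) : IsPP a b c (toPP A) := by
  constructor
  · intro i i' j hii
    have key : ∀ d (u : ℕ) (h : u + d < a),
        (toPP A ⟨u + d, h⟩ j : ℕ) ≤ (toPP A ⟨u, by omega⟩ j : ℕ) := by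
      intro d
      induction d with
      | zero => intro u h; exact le_rfl
      | succ d ih =>
        intro u h
        have h1 : u + d < a := by omega
        have step := toPP_row_adj A (u + d) j.val (by omega) j.isLt
        have : (⟨u + (d+1), h⟩ : Fin a) = ⟨u + d + 1, by omega⟩ := by
          apply Fin.ext; simp; omega
        rw [this]
        have hj : (⟨j.val, j.isLt⟩ : Fin b) = j := by apply Fin.ext; simp
        rw [hj] at step
        exact le_trans step (ih u h1)
    have := key (i'.val - i.val) i.val (by omega)
    have e : (⟨i.val + (i'.val - i.val), by omega⟩ : Fin a) = i' := by
      apply Fin.ext; simp; omega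
    rw [e] at this
    have e2 : (⟨i.val, by omega⟩ : Fin a) = i := by apply Fin.ext; simp
    rw [e2] at this
    exact this
  · intro i j j' hjj
    have key : ∀ d (v : ℕ) (h : v + d < b),
        (toPP A i ⟨v + d, h⟩ : ℕ) ≤ (toPP A i ⟨v, by omega⟩ : ℕ) := by
      intro d
      induction d with
      | zero => intro v h; exact le_rfl
      | succ d ih =>
        intro v h
        have h1 : v + d < b := by omega
        have step := toPP_col_adj A i.val (v + d) i.isLt (by omega)
        have : (⟨v + (d+1), h⟩ : Fin b) = ⟨v + d + 1, by omega⟩ := by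
          apply Fin.ext; simp; omega
        rw [this]
        have hi : (⟨i.val, i.isLt⟩ : Fin a) = i := by apply Fin.ext; simp
        rw [hi] at step
        exact le_trans step (ih v h1)
    have := key (j'.val - j.val) j.val (by omega)
    have e : (⟨j.val + (j'.val - j.val), by omega⟩ : Fin b) = j' := by
      apply Fin.ext; simp; omega
    rw [e] at this
    have e2 : (⟨j.val, by omega⟩ : Fin b) = j := by apply Fin.ext; simp
    rw [e2] at this
    exact this

theorem toPP_mem (A : Fin a → Fin b → Fin (c+1)) : toPP A ∈ ppBox a b c :=
  Finset.mem_filter.mpr ⟨Finset.mem_univ _, toPP_isPP A⟩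


/-- Boundary labels: diagonal slices of `π`. -/
def bd (a b : ℕ) {c : ℕ} (π : Fin a → Fin b → Fin (c+1)) : ℕ → ℕ → Seq :=
  fun i j k => pent π (k+1+(a-i)) (k+1+(b-j))

/-- The backward-filled growth diagram with boundary given by `bd`. -/
def shrink (a b : ℕ) (bdv : ℕ → ℕ → Seq) (i j : ℕ) : Seq :=
  if h : i < a ∧ j < b then
    bwdr (shrink a b bdv (i+1) (j+1)) (shrink a b bdv i (j+1)) (shrink a b bdv (i+1) j)
  else bdv i j
termination_by (a - i) + (b - j)
decreasing_by all_goals omega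

theorem rgrid_ind (a b : ℕ) (P : ℕ → ℕ → Prop)
    (h : ∀ i j, (∀ i' j', (a-i') + (b-j') < (a-i) + (b-j) → P i' j') → P i j) : ∀ i j, P i j := by
  have key : ∀ n i j, (a-i) + (b-j) ≤ n → P i j := by
    intro n
    induction n with
    | zero => intro i j hij; exact h i j (fun i' j' h' => absurd h' (by omega))
    | succ n ih => intro i j hij; exact h i j (fun i' j' h' => ih i' j' (by omega))
  exact fun i j => key ((a-i)+(b-j)) i j le_rfl

theorem shrink_bdry (a b : ℕ) (bdv : ℕ → ℕ → Seq) (i j : ℕ) (h : ¬(i < a ∧ j < b)) :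
    shrink a b bdv i j = bdv i j := by
  rw [shrink, dif_neg h]

theorem shrink_int (a b : ℕ) (bdv : ℕ → ℕ → Seq) (i j : ℕ) (hi : i < a) (hj : j < b) :
    shrink a b bdv i j
      = bwdr (shrink a b bdv (i+1) (j+1)) (shrink a b bdv i (j+1))
          (shrink a b bdv (i+1) j) := by
  rw [shrink]; rw [dif_pos ⟨hi, hj⟩]

theorem bd_isPart (π : Fin a → Fin b → Fin (c+1)) (hπ : IsPP a b c π) (i j : ℕ) :
    IsPart (bd a b π i j) := by
  intro k
  unfold bd
  calc pent π (k+1+1+(a-i)) (k+1+1+(b-j))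
      ≤ pent π (k+1+(a-i)) (k+1+1+(b-j)) := by
        have := pent_row hπ (k+1+(a-i)) (k+1+1+(b-j)) (by omega)
        convert this using 2
        omega
    _ ≤ pent π (k+1+(a-i)) (k+1+(b-j)) := by
        have := pent_col hπ (k+1+(a-i)) (k+1+(b-j)) (by omega)
        convert this using 2
        omega

theorem bd_stripV (π : Fin a → Fin b → Fin (c+1)) (hπ : IsPP a b c π) (i j : ℕ) (hi : i < a) :
    Strip (bd a b π i j) (bd a b π (i+1) j) := by
  intro k
  unfold bd
  constructor
  · have := pent_row hπ (k+1+(a-(i+1))) (k+1+(b-j)) (by omega)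
    convert this using 2
    omega
  · have := pent_col hπ (k+1+(a-i)) (k+1+(b-j)) (by omega)
    have e : k+1+1+(a-(i+1)) = k+1+(a-i) := by omega
    rw [e]
    convert this using 2
    omega

theorem bd_stripH (π : Fin a → Fin b → Fin (c+1)) (hπ : IsPP a b c π) (i j : ℕ) (hj : j < b) :
    Strip (bd a b π i j) (bd a b π i (j+1)) := by
  intro k
  unfold bd
  constructor
  · have := pent_col hπ (k+1+(a-i)) (k+1+(b-(j+1))) (by omega)
    convert this using 2
    omega
  · have := pent_row hπ (k+1+(a-i)) (k+1+(b-j)) (by omega)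
    have e : k+1+1+(b-(j+1)) = k+1+(b-j) := by omega
    rw [e]
    convert this using 2
    omega

/-- Backward invariant for the shrink grid. -/
theorem shrink_inv (π : Fin a → Fin b → Fin (c+1)) (hπ : IsPP a b c π) :
    ∀ i j, i ≤ a → j ≤ b →
      IsPart (shrink a b (bd a b π) i j) ∧
      (i < a → Strip (shrink a b (bd a b π) i j) (shrink a b (bd a b π) (i+1) j)) ∧
      (j < b → Strip (shrink a b (bd a b π) i j) (shrink a b (bd a b π) i (j+1))) := by
  refine rgrid_ind a b _ (fun i j IH => ?_)
  intro hia hjb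
  by_cases h : i < a ∧ j < b
  · obtain ⟨hi, hj⟩ := h
    have hl := (IH (i+1) (j+1) (by omega) (by omega) (by omega)).1
    have hmP := (IH i (j+1) (by omega) (by omega) (by omega)).1
    have hnP := (IH (i+1) j (by omega) (by omega) (by omega)).1
    have sml := (IH i (j+1) (by omega) (by omega) (by omega)).2.1 hi
    have snl := (IH (i+1) j (by omega) (by omega) (by omega)).2.2 hj
    have C := bwd_cell hmP hnP hl sml snl
    rw [shrink_int a b _ i j hi hj]
    exact ⟨C.hr, fun _ => C.snr, fun _ => C.smr⟩
  · rw [shrink_bdry a b _ i j h]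
    refine ⟨bd_isPart π hπ i j, ?_, ?_⟩
    · intro hi
      have hj : j = b := by omega
      rw [shrink_bdry a b _ (i+1) j (by omega)]
      exact bd_stripV π hπ i j hi
    · intro hj
      have hi : i = a := by omega
      rw [shrink_bdry a b _ i (j+1) (by omega)]
      exact bd_stripH π hπ i j hj

theorem shrink_cell (π : Fin a → Fin b → Fin (c+1)) (hπ : IsPP a b c π)
    (i j : ℕ) (hi : i < a) (hj : j < b) :
    Cell (shrink a b (bd a b π) i j) (shrink a b (bd a b π) i (j+1))
      (shrink a b (bd a b π) (i+1) j) (shrink a b (bd a b π) (i+1) (j+1))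
      (bwdx (shrink a b (bd a b π) (i+1) (j+1)) (shrink a b (bd a b π) i (j+1))
        (shrink a b (bd a b π) (i+1) j)) := by
  have hl := (shrink_inv π hπ (i+1) (j+1) (by omega) (by omega)).1
  have hmP := (shrink_inv π hπ i (j+1) (by omega) (by omega)).1
  have hnP := (shrink_inv π hπ (i+1) j (by omega) (by omega)).1
  have sml := (shrink_inv π hπ i (j+1) (by omega) (by omega)).2.1 hi
  have snl := (shrink_inv π hπ (i+1) j (by omega) (by omega)).2.2 hj
  have C := bwd_cell hmP hnP hl sml snl
  rw [shrink_int a b _ i j hi hj]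
  exact C


theorem shrink_zero_le (π : Fin a → Fin b → Fin (c+1)) (hπ : IsPP a b c π) :
    ∀ i j, i ≤ a → j ≤ b → shrink a b (bd a b π) i j 0 ≤ pent π 1 1 := by
  refine rgrid_ind a b _ (fun i j IH => ?_)
  intro hia hjb
  by_cases h : i < a
  · calc shrink a b (bd a b π) i j 0 ≤ shrink a b (bd a b π) (i+1) j 0 :=
        ((shrink_inv π hπ i j hia hjb).2.1 h 0).1
      _ ≤ pent π 1 1 := IH (i+1) j (by omega) (by omega) (by omega)
  · by_cases h' : j < b
    · calc shrink a b (bd a b π) i j 0 ≤ shrink a b (bd a b π) i (j+1) 0 :=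
          ((shrink_inv π hπ i j hia hjb).2.2 h' 0).1
        _ ≤ pent π 1 1 := IH i (j+1) (by omega) (by omega) (by omega)
    · have hi : i = a := by omega
      have hj : j = b := by omega
      rw [hi, hj, shrink_bdry a b _ a b (by omega)]
      unfold bd
      have e1 : 0+1+(a-a) = 1 := by omega
      have e2 : 0+1+(b-b) = 1 := by omega
      rw [e1, e2]

theorem shrink_left_zero (π : Fin a → Fin b → Fin (c+1)) (hπ : IsPP a b c π) :
    ∀ j, j ≤ b → shrink a b (bd a b π) 0 j = fun _ => 0 := by
  intro j hj
  funext k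
  have chain : ∀ d, d ≤ b - j → shrink a b (bd a b π) 0 j k ≤ shrink a b (bd a b π) 0 (j+d) k := by
    intro d
    induction d with
    | zero => intro _; exact le_rfl
    | succ d ih =>
      intro hd
      calc shrink a b (bd a b π) 0 j k ≤ shrink a b (bd a b π) 0 (j+d) k := ih (by omega)
        _ ≤ shrink a b (bd a b π) 0 (j+d+1) k :=
          ((shrink_inv π hπ 0 (j+d) (by omega) (by omega)).2.2 (by omega) k).1
  have h1 := chain (b - j) le_rfl
  have e : j + (b - j) = b := by omega
  rw [e] at h1
  have h2 : shrink a b (bd a b π) 0 b = bd a b π 0 b := by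
    by_cases ha : 0 < a
    · exact shrink_bdry a b _ 0 b (by omega)
    · exact shrink_bdry a b _ 0 b (by omega)
  rw [h2] at h1
  have h3 : bd a b π 0 b k = 0 := by
    unfold bd pent
    rw [dif_neg (by omega)]
  omega

theorem shrink_bot_zero (π : Fin a → Fin b → Fin (c+1)) (hπ : IsPP a b c π) :
    ∀ i, i ≤ a → shrink a b (bd a b π) i 0 = fun _ => 0 := by
  intro i hi
  funext k
  have chain : ∀ d, d ≤ a - i → shrink a b (bd a b π) i 0 k ≤ shrink a b (bd a b π) (i+d) 0 k := by
    intro d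
    induction d with
    | zero => intro _; exact le_rfl
    | succ d ih =>
      intro hd
      calc shrink a b (bd a b π) i 0 k ≤ shrink a b (bd a b π) (i+d) 0 k := ih (by omega)
        _ ≤ shrink a b (bd a b π) (i+d+1) 0 k :=
          ((shrink_inv π hπ (i+d) 0 (by omega) (by omega)).2.1 (by omega) k).1
  have h1 := chain (a - i) le_rfl
  have e : i + (a - i) = a := by omega
  rw [e] at h1
  rw [shrink_bdry a b _ a 0 (by omega)] at h1
  have h3 : bd a b π a 0 k = 0 := by
    unfold bd pent
    rw [dif_neg (by omega)]
  omega

/-- The array extracted from a plane partition by the backward growth rules. -/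
def extractA (π : Fin a → Fin b → Fin (c+1)) : Fin a → Fin b → Fin (c+1) :=
  fun i j =>
    ⟨min (bwdx (shrink a b (bd a b π) (i.val+1) (j.val+1))
        (shrink a b (bd a b π) i.val (j.val+1)) (shrink a b (bd a b π) (i.val+1) j.val)) c,
      Nat.lt_succ_of_le (min_le_right _ _)⟩

theorem aent_extractA (π : Fin a → Fin b → Fin (c+1)) (hπ : IsPP a b c π) (i j : ℕ)
    (h : 1 ≤ i ∧ i ≤ a ∧ 1 ≤ j ∧ j ≤ b) :
    aent (extractA π) i j
      = bwdx (shrink a b (bd a b π) i j)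
          (shrink a b (bd a b π) (i-1) j) (shrink a b (bd a b π) i (j-1)) := by
  unfold aent
  rw [dif_pos h]
  show min (bwdx (shrink a b (bd a b π) (i-1+1) (j-1+1)) _ _) c = _
  have e1 : i - 1 + 1 = i := by omega
  have e2 : j - 1 + 1 = j := by omega
  rw [e1, e2]
  refine min_eq_left ?_
  unfold bwdx
  calc shrink a b (bd a b π) i j 0 - _ ≤ shrink a b (bd a b π) i j 0 := Nat.sub_le _ _
    _ ≤ pent π 1 1 := shrink_zero_le π hπ i j (by omega) (by omega)
    _ ≤ c := pent_le _ _

/-- The forward growth of the extracted array reproduces the backward grid. -/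
theorem grow_extractA (π : Fin a → Fin b → Fin (c+1)) (hπ : IsPP a b c π) :
    ∀ i j, i ≤ a → j ≤ b → grow (aent (extractA π)) i j = shrink a b (bd a b π) i j := by
  refine grid_ind _ (fun i j IH => ?_)
  match i, j with
  | 0, j =>
    intro _ hj
    rw [grow_zero_left, shrink_left_zero π hπ j hj]
  | i+1, 0 =>
    intro hi _
    rw [grow_zero_right, shrink_bot_zero π hπ (i+1) hi]
  | i+1, j+1 =>
    intro hi hj
    rw [grow_succ]
    rw [IH i j (by omega) (by omega) (by omega), IH i (j+1) (by omega) (by omega) (by omega),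
      IH (i+1) j (by omega) (by omega) (by omega)]
    have C := shrink_cell π hπ i j (by omega) (by omega)
    have hx : aent (extractA π) (i+1) (j+1)
        = bwdx (shrink a b (bd a b π) (i+1) (j+1)) (shrink a b (bd a b π) i (j+1))
            (shrink a b (bd a b π) (i+1) j) := by
      rw [aent_extractA π hπ (i+1) (j+1) (by omega)]
      have e1 : i + 1 - 1 = i := by omega
      have e2 : j + 1 - 1 = j := by omega
      rw [e1, e2]
    rw [hx]
    exact (cell_l_eq C).symm

theorem extractA_mem (π : Fin a → Fin b → Fin (c+1)) (hπ : IsPP a b c π) :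
    extractA π ∈ arrBox a b c := by
  refine Finset.mem_filter.mpr ⟨Finset.mem_univ _, ?_⟩
  rw [grow_extractA π hπ a b le_rfl le_rfl]
  calc shrink a b (bd a b π) a b 0 ≤ pent π 1 1 := shrink_zero_le π hπ a b le_rfl le_rfl
    _ ≤ c := pent_le _ _

/-- Round trip: rebuilding the plane partition from the extracted array. -/
theorem toPP_extractA (π : Fin a → Fin b → Fin (c+1)) (hπ : IsPP a b c π) :
    toPP (extractA π) = π := by
  have hA : grow (aent (extractA π)) a b 0 ≤ c := by
    have := extractA_mem π hπ
    exact (Finset.mem_filter.mp this).2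
  funext i j
  apply Fin.ext
  have hbox : 1 ≤ i.val + 1 ∧ i.val + 1 ≤ a ∧ 1 ≤ j.val + 1 ∧ j.val + 1 ≤ b := by omega
  have h1 : pent (toPP (extractA π)) (i.val+1) (j.val+1) = (toPP (extractA π) i j : ℕ) := by
    unfold pent
    rw [dif_pos hbox]
    congr 1 <;> apply Fin.ext <;> simp
  have h2 : pent π (i.val+1) (j.val+1) = (π i j : ℕ) := by
    unfold pent
    rw [dif_pos hbox]
    congr 1 <;> apply Fin.ext <;> simp
  rw [← h1, ← h2]
  rw [pent_toPP hA (i.val+1) (j.val+1) hbox]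
  set u := i.val with hu
  set v := j.val with hv
  have e1 : u + 1 - 1 = u := by omega
  have e2 : v + 1 - 1 = v := by omega
  rw [e1, e2]
  set e := min u v with he
  set I := a - (u - e) with hI
  set J := b - (v - e) with hJ
  rw [grow_extractA π hπ I J (by omega) (by omega)]
  have hbdry : ¬(I < a ∧ J < b) := by
    rcases Nat.le_total u v with h | h
    · have : I = a := by rw [hI, he]; omega
      omega
    · have : J = b := by rw [hJ, he]; omega
      omega
  rw [shrink_bdry a b _ I J hbdry]
  unfold bd
  have eI : e + 1 + (a - I) = u + 1 := by
    have : u - e ≤ a - 1 := by omega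
    omega
  have eJ : e + 1 + (b - J) = v + 1 := by
    have : v - e ≤ b - 1 := by omega
    omega
  rw [eI, eJ]

/-- Boundary of the forward grid equals the diagonal slices of `toPP A`. -/
theorem bd_toPP (A : Fin a → Fin b → Fin (c+1)) (hA : grow (aent A) a b 0 ≤ c)
    (i j : ℕ) (hi : i ≤ a) (hj : j ≤ b) (hb : i = a ∨ j = b) :
    bd a b (toPP A) i j = grow (aent A) i j := by
  funext k
  unfold bd
  by_cases hin : k + 1 ≤ i ∧ k + 1 ≤ j
  · rw [pent_toPP hA (k+1+(a-i)) (k+1+(b-j)) (by omega)]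
    have e1 : k+1+(a-i) - 1 = k + (a-i) := by omega
    have e2 : k+1+(b-j) - 1 = k + (b-j) := by omega
    rw [e1, e2]
    rcases hb with hba | hbb
    · rw [hba]
      have e3 : min (k + (a-a)) (k + (b-j)) = k := by omega
      rw [e3]
      have e4 : a - (k + (a - a) - k) = a := by omega
      have e5 : b - (k + (b - j) - k) = j := by omega
      rw [e4, e5]
    · rw [hbb]
      have e3 : min (k + (a-i)) (k + (b-b)) = k := by omega
      rw [e3]
      have e4 : a - (k + (a - i) - k) = i := by omega
      have e5 : b - (k + (b - b) - k) = b := by omega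
      rw [e4, e5]
  · have hz : grow (aent A) i j k = 0 := grow_partBound _ i j k (by omega)
    rw [hz]
    unfold pent
    rw [dif_neg (by omega)]

/-- Round trip: the backward grid of `toPP A` recovers the forward grid of `A`. -/
theorem shrink_toPP (A : Fin a → Fin b → Fin (c+1)) (hA : grow (aent A) a b 0 ≤ c) :
    ∀ i j, i ≤ a → j ≤ b → shrink a b (bd a b (toPP A)) i j = grow (aent A) i j := by
  refine rgrid_ind a b _ (fun i j IH => ?_)
  intro hia hjb
  by_cases h : i < a ∧ j < b
  · rw [shrink_int a b _ i j h.1 h.2]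
    rw [IH (i+1) (j+1) (by omega) (by omega) (by omega),
      IH i (j+1) (by omega) (by omega) (by omega), IH (i+1) j (by omega) (by omega) (by omega)]
    exact (cell_r_eq (grow_cell (aent A) i j)).symm
  · rw [shrink_bdry a b _ i j h]
    exact bd_toPP A hA i j hia hjb (by omega)

/-- Round trip: extracting from `toPP A` gives back `A`. -/
theorem extractA_toPP (A : Fin a → Fin b → Fin (c+1)) (hA : grow (aent A) a b 0 ≤ c) :
    extractA (toPP A) = A := by
  funext i j
  apply Fin.ext
  show min (bwdx (shrink a b (bd a b (toPP A)) (i.val+1) (j.val+1))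
      (shrink a b (bd a b (toPP A)) i.val (j.val+1))
      (shrink a b (bd a b (toPP A)) (i.val+1) j.val)) c = (A i j : ℕ)
  rw [shrink_toPP A hA (i.val+1) (j.val+1) (by omega) (by omega),
    shrink_toPP A hA i.val (j.val+1) (by omega) (by omega),
    shrink_toPP A hA (i.val+1) j.val (by omega) (by omega)]
  have hx := cell_x_eq (grow_cell (aent A) i.val j.val)
  rw [← hx]
  have : aent A (i.val+1) (j.val+1) = (A i j : ℕ) := by
    unfold aent
    rw [dif_pos (by omega)]
    congr 1 <;> apply Fin.ext <;> simp
  rw [this]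
  exact min_eq_left (Nat.lt_succ_iff.mp (Fin.is_lt _))


/-! ### Statistics -/

/-- trace of `toPP A` equals the sum of all entries of `A`. -/
theorem ppTr_toPP (A : Fin a → Fin b → Fin (c+1)) (hA : grow (aent A) a b 0 ≤ c) :
    ppTr (toPP A) = boxSum (aent A) a b := by
  unfold ppTr
  have h1 : ∀ i ∈ Finset.Icc 1 (min a b), pent (toPP A) i i = grow (aent A) a b (i-1) := by
    intro i hi
    rw [Finset.mem_Icc] at hi
    rw [pent_toPP hA i i (by omega)]
    have e1 : min (i-1) (i-1) = i - 1 := by omega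
    rw [e1]
    have e2 : a - (i - 1 - (i-1)) = a := by omega
    have e3 : b - (i - 1 - (i-1)) = b := by omega
    rw [e2, e3]
  rw [Finset.sum_congr rfl h1, icc_to_range]
  have h2 : ∀ x, x + 1 - 1 = x := fun x => by omega
  rw [Finset.sum_congr rfl (fun x _ => by rw [h2 x])]
  have h3 : ∑ x ∈ Finset.range (min a b), grow (aent A) a b x
      = ∑ x ∈ Finset.range (a + b + 1), grow (aent A) a b x := by
    apply Finset.sum_subset (Finset.range_subset_range.mpr (by omega))
    intro x _ hx
    rw [Finset.mem_range] at hx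
    push_neg at hx
    exact grow_partBound _ a b x (by omega)
  rw [h3]
  have h4 := gsz_eq_boxSum (aent A) (a+b) a b (by omega) (by omega)
  unfold gsz at h4
  exact h4

/-- number of corners equals the sum of all entries of the rotated corner array. -/
theorem ppCor_card (π : Fin a → Fin b → Fin (c+1)) (hπ : IsPP a b c π) :
    (ppCor π).card = boxSum (aent (toArr π)) a b := by
  calc (ppCor π).card = ∑ p ∈ ppCor π, (fun (_ _ : ℕ) => 1) p.1 p.2.1 :=
        Finset.card_eq_sum_ones _
    _ = _ := ppCor_weighted π hπ (fun _ _ => 1)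
    _ = _ := corner_sum_reflect π (fun _ _ => 1)
    _ = boxSum (aent (toArr π)) a b := by
        unfold boxSum
        refine Finset.sum_congr rfl (fun x _ => Finset.sum_congr rfl (fun y _ => one_mul _))

/-- corner-hook volume as a weighted sum of the rotated corner array. -/
theorem ppChVol_eq (π : Fin a → Fin b → Fin (c+1)) (hπ : IsPP a b c π) :
    ppChVol π = ∑ x ∈ Finset.range a, ∑ y ∈ Finset.range b,
      (a + b - 1 - x - y) * aent (toArr π) (x+1) (y+1) := by
  calc ppChVol π = ∑ p ∈ ppCor π, (fun (i j : ℕ) => i + j - 1) p.1 p.2.1 := rfl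
    _ = _ := ppCor_weighted π hπ (fun i j => i + j - 1)
    _ = _ := corner_sum_reflect π (fun i j => i + j - 1)
    _ = ∑ x ∈ Finset.range a, ∑ y ∈ Finset.range b,
        (a + b - 1 - x - y) * aent (toArr π) (x+1) (y+1) := by
      refine Finset.sum_congr rfl (fun x hx => Finset.sum_congr rfl (fun y hy => ?_))
      rw [Finset.mem_range] at hx hy
      have e : a - x + (b - y) - 1 = a + b - 1 - x - y := by omega
      rw [e]


/-- Volume of `toPP A` equals the weighted sum of entries of `A`. -/
theorem ppVol_toPP (A : Fin a → Fin b → Fin (c+1)) (hA : grow (aent A) a b 0 ≤ c) (hb : 1 ≤ b) :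
    ppVol (toPP A) = ∑ x ∈ Finset.range a, ∑ y ∈ Finset.range b,
      (a + b - 1 - x - y) * aent A (x+1) (y+1) := by
  set G := aent A with hG
  set g : ℕ → ℕ → ℕ := fun u v => grow G (a-(u - min u v)) (b-(v - min u v)) (min u v) with hg
  have h1 : ∀ (i : Fin a) (j : Fin b), ((toPP A i j : ℕ)) = g i.val j.val := by
    intro i j
    rw [toPP_entry]
    exact min_eq_left (grow_le_c hA (by omega) (by omega) _)
  have stepA : ppVol (toPP A) = ∑ p ∈ Finset.range a ×ˢ Finset.range b, g p.1 p.2 := by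
    unfold ppVol
    calc ∑ i : Fin a, ∑ j : Fin b, ((toPP A i j : ℕ))
        = ∑ i : Fin a, ∑ j : Fin b, g i.val j.val :=
          Finset.sum_congr rfl (fun i _ => Finset.sum_congr rfl (fun j _ => h1 i j))
      _ = ∑ i : Fin a, ∑ v ∈ Finset.range b, g i.val v :=
          Finset.sum_congr rfl (fun i _ => Fin.sum_univ_eq_sum_range (g i.val) b)
      _ = ∑ u ∈ Finset.range a, ∑ v ∈ Finset.range b, g u v :=
          Fin.sum_univ_eq_sum_range (fun u => ∑ v ∈ Finset.range b, g u v) a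
      _ = ∑ p ∈ Finset.range a ×ˢ Finset.range b, g p.1 p.2 :=
          by rw [Finset.sum_product]
  -- split into the two boundary families
  have split := Finset.sum_filter_add_sum_filter_not (Finset.range a ×ˢ Finset.range b)
    (fun p => p.2 ≤ p.1) (fun p => g p.1 p.2)
  -- part 1 : cells weakly below the diagonal
  have sig_ext : ∀ (x y k m : ℕ), x = y → k = m → (⟨x, k⟩ : (_ : ℕ) × ℕ) = ⟨y, m⟩ := by
    intro x y k m h1 h2; subst h1; subst h2; rfl
  have part1 : ∑ p ∈ (Finset.range a ×ˢ Finset.range b).filter (fun p => p.2 ≤ p.1), g p.1 p.2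
      = ∑ x ∈ Finset.range a, ∑ k ∈ Finset.range (min (x+1) b), grow G (x+1) b k := by
    rw [Finset.sum_sigma' (Finset.range a) (fun x => Finset.range (min (x+1) b))
      (fun x k => grow G (x+1) b k)]
    refine Finset.sum_nbij' (fun p => (⟨a-1-(p.1-p.2), p.2⟩ : (_ : ℕ) × ℕ))
      (fun q => (q.2 + (a-1-q.1), q.2)) ?_ ?_ ?_ ?_ ?_
    · intro p hp
      rw [Finset.mem_filter, Finset.mem_product, Finset.mem_range, Finset.mem_range] at hp
      rw [Finset.mem_sigma, Finset.mem_range, Finset.mem_range]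
      dsimp only
      omega
    · intro q hq
      rw [Finset.mem_sigma, Finset.mem_range, Finset.mem_range] at hq
      rw [Finset.mem_filter, Finset.mem_product, Finset.mem_range, Finset.mem_range]
      dsimp only
      omega
    · intro p hp
      rw [Finset.mem_filter, Finset.mem_product, Finset.mem_range, Finset.mem_range] at hp
      dsimp only
      have e1 : a - 1 - (a - 1 - (p.1 - p.2)) = p.1 - p.2 := by omega
      rw [e1]
      have e2 : p.2 + (p.1 - p.2) = p.1 := by omega
      rw [e2]
    · intro q hq
      rw [Finset.mem_sigma, Finset.mem_range, Finset.mem_range] at hq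
      rcases q with ⟨x, k⟩
      dsimp only at hq ⊢
      exact sig_ext _ _ _ _ (by omega) rfl
    · intro p hp
      rw [Finset.mem_filter, Finset.mem_product, Finset.mem_range, Finset.mem_range] at hp
      show g p.1 p.2 = grow G ((a-1-(p.1-p.2))+1) b p.2
      rw [hg]
      simp only
      have e1 : min p.1 p.2 = p.2 := by omega
      rw [e1]
      have e2 : b - (p.2 - p.2) = b := by omega
      rw [e2]
      have e3 : a - 1 - (p.1 - p.2) + 1 = a - (p.1 - p.2) := by omega
      rw [e3]
  -- part 2 : cells strictly above the diagonal
  have part2 : ∑ p ∈ (Finset.range a ×ˢ Finset.range b).filter (fun p => ¬ p.2 ≤ p.1), g p.1 p.2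
      = ∑ y ∈ Finset.range (b-1), ∑ k ∈ Finset.range (min a (y+1)), grow G a (y+1) k := by
    rw [Finset.sum_sigma' (Finset.range (b-1)) (fun y => Finset.range (min a (y+1)))
      (fun y k => grow G a (y+1) k)]
    refine Finset.sum_nbij' (fun p => (⟨b-(p.2-p.1)-1, p.1⟩ : (_ : ℕ) × ℕ))
      (fun q => (q.2, q.2 + (b-1-q.1))) ?_ ?_ ?_ ?_ ?_
    · intro p hp
      rw [Finset.mem_filter, Finset.mem_product, Finset.mem_range, Finset.mem_range] at hp
      rw [Finset.mem_sigma, Finset.mem_range, Finset.mem_range]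
      dsimp only
      omega
    · intro q hq
      rw [Finset.mem_sigma, Finset.mem_range, Finset.mem_range] at hq
      rw [Finset.mem_filter, Finset.mem_product, Finset.mem_range, Finset.mem_range]
      dsimp only
      omega
    · intro p hp
      rw [Finset.mem_filter, Finset.mem_product, Finset.mem_range, Finset.mem_range] at hp
      dsimp only
      have e1 : b - 1 - (b - (p.2 - p.1) - 1) = p.2 - p.1 := by omega
      rw [e1]
      have e2 : p.1 + (p.2 - p.1) = p.2 := by omega
      rw [e2]
    · intro q hq
      rw [Finset.mem_sigma, Finset.mem_range, Finset.mem_range] at hq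
      rcases q with ⟨y, k⟩
      dsimp only at hq ⊢
      exact sig_ext _ _ _ _ (by omega) rfl
    · intro p hp
      rw [Finset.mem_filter, Finset.mem_product, Finset.mem_range, Finset.mem_range] at hp
      show g p.1 p.2 = grow G a ((b-(p.2-p.1)-1)+1) p.1
      rw [hg]
      simp only
      have e1 : min p.1 p.2 = p.1 := by omega
      rw [e1]
      have e2 : a - (p.1 - p.1) = a := by omega
      rw [e2]
      have e3 : b - (p.2 - p.1) - 1 + 1 = b - (p.2 - p.1) := by omega
      rw [e3]
  -- extend inner sums and convert to box sums
  have ext1 : ∀ x ∈ Finset.range a,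
      ∑ k ∈ Finset.range (min (x+1) b), grow G (x+1) b k = boxSum G (x+1) b := by
    intro x hx
    rw [Finset.mem_range] at hx
    have : ∑ k ∈ Finset.range (min (x+1) b), grow G (x+1) b k
        = ∑ k ∈ Finset.range (a+b+1), grow G (x+1) b k := by
      apply Finset.sum_subset (Finset.range_subset_range.mpr (by omega))
      intro k _ hk
      rw [Finset.mem_range] at hk
      exact grow_partBound _ (x+1) b k (by omega)
    rw [this]
    exact gsz_eq_boxSum G (a+b) (x+1) b (by omega) (by omega)
  have ext2 : ∀ y ∈ Finset.range (b-1),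
      ∑ k ∈ Finset.range (min a (y+1)), grow G a (y+1) k = boxSum G a (y+1) := by
    intro y hy
    rw [Finset.mem_range] at hy
    have : ∑ k ∈ Finset.range (min a (y+1)), grow G a (y+1) k
        = ∑ k ∈ Finset.range (a+b+1), grow G a (y+1) k := by
      apply Finset.sum_subset (Finset.range_subset_range.mpr (by omega))
      intro k _ hk
      rw [Finset.mem_range] at hk
      exact grow_partBound _ a (y+1) k (by omega)
    rw [this]
    exact gsz_eq_boxSum G (a+b) a (y+1) (by omega) (by omega)
  rw [stepA, ← split, part1, part2, Finset.sum_congr rfl ext1, Finset.sum_congr rfl ext2]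
  exact boundary_weight G a b hb


end PPGrowth


open PPGrowth in
/-- **Equidistribution of (volume, trace) and (corner-hook volume, corners).**
For all positive integers `a, b, c`, as polynomials in `q = X 0` and `t = X 1`,
`Σ_{π ∈ PP(a,b,c)} q^{|π|} t^{tr(π)} = Σ_{π ∈ PP(a,b,c)} q^{|π|_{ch}} t^{cor(π)}`. -/
theorem statement0 (a b c : ℕ) (ha : 0 < a) (hb : 0 < b) (hc : 0 < c) :
    ∑ π ∈ ppBox a b c,
        (MvPolynomial.X 0 : MvPolynomial (Fin 2) ℤ) ^ ppVol π * MvPolynomial.X 1 ^ ppTr π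
      = ∑ π ∈ ppBox a b c,
        (MvPolynomial.X 0 : MvPolynomial (Fin 2) ℤ) ^ ppChVol π *
          MvPolynomial.X 1 ^ (ppCor π).card := by
  have key1 : ∑ π ∈ ppBox a b c,
      (MvPolynomial.X 0 : MvPolynomial (Fin 2) ℤ) ^ ppVol π * MvPolynomial.X 1 ^ ppTr π
      = ∑ A ∈ arrBox a b c,
        (MvPolynomial.X 0 : MvPolynomial (Fin 2) ℤ)
            ^ (∑ x ∈ Finset.range a, ∑ y ∈ Finset.range b, (a+b-1-x-y) * aent A (x+1) (y+1))
          * MvPolynomial.X 1 ^ (boxSum (aent A) a b) := by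
    refine Finset.sum_nbij' (fun π => extractA π) (fun A => toPP A) ?_ ?_ ?_ ?_ ?_
    · intro π hπ
      exact extractA_mem π (Finset.mem_filter.mp hπ).2
    · intro A _
      exact toPP_mem A
    · intro π hπ
      exact toPP_extractA π (Finset.mem_filter.mp hπ).2
    · intro A hA
      exact extractA_toPP A (Finset.mem_filter.mp hA).2
    · intro π hπ
      have hπ' := (Finset.mem_filter.mp hπ).2
      have hmem := extractA_mem π hπ'
      have hA : grow (aent (extractA π)) a b 0 ≤ c := (Finset.mem_filter.mp hmem).2
      have hback := toPP_extractA π hπ'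
      rw [← hback, ppVol_toPP (extractA π) hA (by omega), ppTr_toPP (extractA π) hA]
      rw [extractA_toPP (extractA π) hA]
  have key2 : ∑ π ∈ ppBox a b c,
      (MvPolynomial.X 0 : MvPolynomial (Fin 2) ℤ) ^ ppChVol π
        * MvPolynomial.X 1 ^ (ppCor π).card
      = ∑ A ∈ arrBox a b c,
        (MvPolynomial.X 0 : MvPolynomial (Fin 2) ℤ)
            ^ (∑ x ∈ Finset.range a, ∑ y ∈ Finset.range b, (a+b-1-x-y) * aent A (x+1) (y+1))
          * MvPolynomial.X 1 ^ (boxSum (aent A) a b) := by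
    refine Finset.sum_nbij' (fun π => toArr π) (fun A => fromArr A) ?_ ?_ ?_ ?_ ?_
    · intro π hπ
      exact toArr_mem π (Finset.mem_filter.mp hπ).2
    · intro A _
      exact fromArr_mem A
    · intro π hπ
      exact fromArr_toArr π (Finset.mem_filter.mp hπ).2
    · intro A hA
      exact toArr_fromArr A (Finset.mem_filter.mp hA).2
    · intro π hπ
      have hπ' := (Finset.mem_filter.mp hπ).2
      rw [ppChVol_eq π hπ', ppCor_card π hπ']
  rw [key1, key2]

end
end

section
/- For all positive integers m, n, as polynomials in q and t, Σ_{λ ∈ P(m,n)} q^{|λ|} t^{d(λ)} = Σ_{λ ∈ P(m,n)} q^{|λ|_c} t^{cor(λ)}, where the sums run over all partitions λ whose Young diagram fits inside the box [m]×[n]. -/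
attribute [local instance] Classical.propDecidable

noncomputable section

/-- A partition with Young diagram inside the box `[m]×[n]`, recorded by its
weakly decreasing sequence of parts `λ_{i+1} = f i` (0-indexed). -/
def IsPart (m n : ℕ) (f : Fin m → Fin (n+1)) : Prop :=
  ∀ i i' : Fin m, i ≤ i' → f i' ≤ f i

/-- The part `λ_i` (1-based index), zero outside the box. -/
def bent {m n : ℕ} (f : Fin m → Fin (n+1)) (i : ℕ) : ℕ :=
  if h : 1 ≤ i ∧ i ≤ m then (f ⟨i - 1, by omega⟩ : ℕ) else 0

/-- The area `|λ| = Σ_i λ_i`. -/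
def bArea {m n : ℕ} (f : Fin m → Fin (n+1)) : ℕ := ∑ i : Fin m, (f i : ℕ)

/-- The Durfee square side `d(λ)`: the largest `k` with `λ_k ≥ k`. -/
def bDurfee {m n : ℕ} (f : Fin m → Fin (n+1)) : ℕ :=
  sSup {k : ℕ | 1 ≤ k ∧ k ≤ bent f k}

/-- The set of corners of `λ`: the cells `(i,j) ∈ D(λ)` (1-based, so
`1 ≤ j ≤ λ_i`) with `(i+1,j) ∉ D(λ)` and `(i,j+1) ∉ D(λ)`. -/
def bCor {m n : ℕ} (f : Fin m → Fin (n+1)) : Finset (ℕ × ℕ) :=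
  (Finset.Icc 1 m ×ˢ Finset.Icc 1 n).filter
    (fun p => p.2 ≤ bent f p.1 ∧ bent f (p.1 + 1) < p.2 ∧ bent f p.1 < p.2 + 1)

/-- The cohook area `|λ|_c = Σ_{(i,j) ∈ Cor(λ)} (i + j - 1)`. -/
def bChArea {m n : ℕ} (f : Fin m → Fin (n+1)) : ℕ :=
  ∑ p ∈ bCor f, (p.1 + p.2 - 1)

namespace S2

open Finset

variable {m n : ℕ}

lemma bent_le_n (f : Fin m → Fin (n+1)) (i : ℕ) : bent f i ≤ n := by
  unfold bent
  split
  · exact Fin.is_le _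
  · exact Nat.zero_le _

lemma bent_zero_of_gt (f : Fin m → Fin (n+1)) {i : ℕ} (h : m < i) : bent f i = 0 := by
  unfold bent
  rw [dif_neg]; omega

lemma bent_zero_zero (f : Fin m → Fin (n+1)) : bent f 0 = 0 := by
  unfold bent; rw [dif_neg]; omega

lemma bent_anti {f : Fin m → Fin (n+1)} (hf : IsPart m n f) {i i' : ℕ}
    (h1 : 1 ≤ i) (h2 : i ≤ i') : bent f i' ≤ bent f i := by
  unfold bent
  by_cases h : 1 ≤ i' ∧ i' ≤ m
  · have hi : 1 ≤ i ∧ i ≤ m := ⟨h1, le_trans h2 h.2⟩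
    rw [dif_pos h, dif_pos hi]
    exact hf ⟨i - 1, by omega⟩ ⟨i' - 1, by omega⟩ (by simp [Fin.le_def]; omega)
  · rw [dif_neg h]
    exact Nat.zero_le _

/-- the Durfee set -/
lemma durfee_bddAbove (f : Fin m → Fin (n+1)) :
    BddAbove {k : ℕ | 1 ≤ k ∧ k ≤ bent f k} := by
  refine ⟨m, fun j hj => ?_⟩
  by_contra hcon
  have : bent f j = 0 := bent_zero_of_gt f (by omega)
  have := hj.1; have := hj.2; omega

lemma kk_mem_of_pos {f : Fin m → Fin (n+1)} (hk : 1 ≤ bDurfee f) :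
    1 ≤ bDurfee f ∧ bDurfee f ≤ bent f (bDurfee f) := by
  have hne : {k : ℕ | 1 ≤ k ∧ k ≤ bent f k}.Nonempty := by
    by_contra hcon
    rw [Set.not_nonempty_iff_eq_empty] at hcon
    have : bDurfee f = 0 := by unfold bDurfee; rw [hcon]; exact csSup_empty
    omega
  exact Nat.sSup_mem hne (durfee_bddAbove f)

lemma kk_le_m (f : Fin m → Fin (n+1)) : bDurfee f ≤ m := by
  by_cases hk : 1 ≤ bDurfee f
  · have h := (kk_mem_of_pos hk).2
    by_contra hcon
    have := bent_zero_of_gt f (i := bDurfee f) (by omega)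
    omega
  · omega

lemma kk_le_n (f : Fin m → Fin (n+1)) : bDurfee f ≤ n := by
  by_cases hk : 1 ≤ bDurfee f
  · have h := (kk_mem_of_pos hk).2
    have := bent_le_n f (bDurfee f)
    omega
  · omega

lemma bent_succ_kk_le (f : Fin m → Fin (n+1)) :
    bent f (bDurfee f + 1) ≤ bDurfee f := by
  by_contra hcon
  have hmem : bDurfee f + 1 ∈ {k : ℕ | 1 ≤ k ∧ k ≤ bent f k} := ⟨by omega, by omega⟩
  have := le_csSup (durfee_bddAbove f) hmem
  unfold bDurfee at this
  omega

lemma bent_le_kk_of_gt {f : Fin m → Fin (n+1)} (hf : IsPart m n f) {j : ℕ}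
    (hj : bDurfee f < j) : bent f j ≤ bDurfee f := by
  have h1 := bent_succ_kk_le f
  have h2 := bent_anti hf (i := bDurfee f + 1) (i' := j) (by omega) (by omega)
  omega

lemma kk_le_bent {f : Fin m → Fin (n+1)} (hf : IsPart m n f) {s : ℕ}
    (h1 : 1 ≤ s) (h2 : s ≤ bDurfee f) : bDurfee f ≤ bent f s := by
  have hm := (kk_mem_of_pos (f := f) (by omega)).2
  have := bent_anti hf h1 h2
  omega

lemma bent_zero_of_kk_zero {f : Fin m → Fin (n+1)} (hf : IsPart m n f)
    (hk : bDurfee f = 0) {i : ℕ} (h1 : 1 ≤ i) : bent f i = 0 := by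
  have h1' : bent f 1 = 0 := by
    by_contra hcon
    have hmem : 1 ∈ {k : ℕ | 1 ≤ k ∧ k ≤ bent f k} := ⟨le_refl 1, by omega⟩
    have := le_csSup (durfee_bddAbove f) hmem
    unfold bDurfee at hk
    omega
  have := bent_anti hf (i := 1) (i' := i) (le_refl 1) h1
  omega

end S2

namespace S2

variable {m n : ℕ}

/-- `γ t` : number of rows strictly below the Durfee square with at least `t` cells. -/
def gam (f : Fin m → Fin (n+1)) (t : ℕ) : ℕ :=
  ((Finset.Icc (bDurfee f + 1) m).filter (fun r => t ≤ bent f r)).card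

/-- row index `i_s` of the `s`-th corner of the image partition -/
def iI (f : Fin m → Fin (n+1)) (s : ℕ) : ℕ := s + gam f (bDurfee f + 1 - s)

/-- column index `j_s` of the `s`-th corner of the image partition -/
def jJ (f : Fin m → Fin (n+1)) (s : ℕ) : ℕ :=
  (bent f s - bDurfee f) + (bDurfee f + 1 - s)

/-- block index of row `i` -/
def sig (f : Fin m → Fin (n+1)) (i : ℕ) : ℕ :=
  1 + ((Finset.Icc 1 (bDurfee f)).filter (fun s => iI f s < i)).card

/-- the parts of the image partition -/
def nu (f : Fin m → Fin (n+1)) (i : ℕ) : ℕ :=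
  if 1 ≤ bDurfee f ∧ 1 ≤ i ∧ i ≤ iI f (bDurfee f) then jJ f (sig f i) else 0

lemma gam_anti (f : Fin m → Fin (n+1)) {t t' : ℕ} (h : t ≤ t') : gam f t' ≤ gam f t :=
  Finset.card_le_card (by
    intro r hr
    simp only [Finset.mem_filter] at hr ⊢
    exact ⟨hr.1, le_trans h hr.2⟩)

lemma gam_le (f : Fin m → Fin (n+1)) (t : ℕ) : gam f t ≤ m - bDurfee f := by
  unfold gam
  refine le_trans (Finset.card_le_card (Finset.filter_subset _ _)) ?_
  rw [Nat.card_Icc]; omega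

lemma gam_kk_succ {f : Fin m → Fin (n+1)} (hf : IsPart m n f) :
    gam f (bDurfee f + 1) = 0 := by
  unfold gam
  rw [Finset.card_eq_zero, Finset.filter_eq_empty_iff]
  intro r hr
  simp only [Finset.mem_Icc] at hr
  have := bent_le_kk_of_gt hf (j := r) (by omega)
  omega

lemma iI_lt_iI (f : Fin m → Fin (n+1)) {s s' : ℕ} (h : s < s') : iI f s < iI f s' := by
  unfold iI
  have := gam_anti f (t := bDurfee f + 1 - s') (t' := bDurfee f + 1 - s) (by omega)
  omega

lemma iI_mono (f : Fin m → Fin (n+1)) {s s' : ℕ} (h : s ≤ s') : iI f s ≤ iI f s' := by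
  rcases Nat.eq_or_lt_of_le h with h1 | h1
  · rw [h1]
  · exact le_of_lt (iI_lt_iI f h1)

lemma iI_kk_le_m (f : Fin m → Fin (n+1)) : iI f (bDurfee f) ≤ m := by
  unfold iI
  have h1 := gam_le f (bDurfee f + 1 - bDurfee f)
  have h2 := kk_le_m f
  omega

lemma iI_zero {f : Fin m → Fin (n+1)} (hf : IsPart m n f) : iI f 0 = 0 := by
  unfold iI
  rw [Nat.sub_zero, gam_kk_succ hf]

lemma jJ_pos (f : Fin m → Fin (n+1)) {s : ℕ} (h : s ≤ bDurfee f) : 1 ≤ jJ f s := by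
  unfold jJ; omega

lemma jJ_le_n (f : Fin m → Fin (n+1)) {s : ℕ} (h : 1 ≤ s) : jJ f s ≤ n := by
  unfold jJ
  have h1 := bent_le_n f s
  have h2 := kk_le_n f
  omega

lemma jJ_lt_jJ {f : Fin m → Fin (n+1)} (hf : IsPart m n f) {s s' : ℕ}
    (h1 : 1 ≤ s) (h : s < s') (h2 : s' ≤ bDurfee f) : jJ f s' < jJ f s := by
  unfold jJ
  have ha := kk_le_bent hf h1 (by omega)
  have hb := kk_le_bent hf (s := s') (by omega) h2
  have hc := bent_anti hf h1 (le_of_lt h)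
  omega

end S2

namespace S2

variable {m n : ℕ}

lemma sig_le_kk {f : Fin m → Fin (n+1)} (hk : 1 ≤ bDurfee f) {i : ℕ}
    (h2 : i ≤ iI f (bDurfee f)) : sig f i ≤ bDurfee f := by
  unfold sig
  have hmem : bDurfee f ∈ Finset.Icc 1 (bDurfee f) := Finset.mem_Icc.mpr ⟨hk, le_refl _⟩
  have hnp : ¬ iI f (bDurfee f) < i := by omega
  have hss := Finset.card_lt_card
    ((Finset.filter_ssubset (p := fun s => iI f s < i)).mpr ⟨bDurfee f, hmem, hnp⟩)
  rw [Nat.card_Icc] at hss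
  omega

lemma sig_pos (f : Fin m → Fin (n+1)) (i : ℕ) : 1 ≤ sig f i := by
  unfold sig; omega

lemma sig_eq {f : Fin m → Fin (n+1)} {s i : ℕ} (h1 : 1 ≤ s) (h2 : s ≤ bDurfee f)
    (ha : iI f (s-1) < i) (hb : i ≤ iI f s) : sig f i = s := by
  unfold sig
  have hset : (Finset.Icc 1 (bDurfee f)).filter (fun s' => iI f s' < i)
      = Finset.Icc 1 (s-1) := by
    ext s'
    simp only [Finset.mem_filter, Finset.mem_Icc]
    constructor
    · rintro ⟨⟨hs1, hs2⟩, hlt⟩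
      refine ⟨hs1, ?_⟩
      by_contra hc
      have hge : s ≤ s' := by omega
      have := iI_mono f hge
      omega
    · rintro ⟨hs1, hs2⟩
      have := iI_mono f (show s' ≤ s - 1 from hs2)
      exact ⟨⟨hs1, by omega⟩, by omega⟩
  rw [hset, Nat.card_Icc]
  omega

lemma sig_spec {f : Fin m → Fin (n+1)} (hf : IsPart m n f) (hk : 1 ≤ bDurfee f)
    {i : ℕ} (h1 : 1 ≤ i) (h2 : i ≤ iI f (bDurfee f)) :
    iI f (sig f i - 1) < i ∧ i ≤ iI f (sig f i) := by
  have hsk := sig_le_kk hk h2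
  have hs1 := sig_pos f i
  set c := ((Finset.Icc 1 (bDurfee f)).filter (fun s => iI f s < i)).card with hc
  have hsig : sig f i = 1 + c := rfl
  constructor
  · -- iI f (sig f i - 1) < i
    rcases Nat.eq_zero_or_pos c with h0 | hpos
    · have := iI_zero hf
      rw [hsig, h0]
      simpa [this] using (show 0 < i by omega)
    · rw [hsig]
      have hcc : 1 + c - 1 = c := by omega
      rw [hcc]
      by_contra hcon
      push_neg at hcon
      have hsub : (Finset.Icc 1 (bDurfee f)).filter (fun s => iI f s < i)
          ⊆ Finset.Icc 1 (c-1) := by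
        intro s' hs'
        simp only [Finset.mem_filter, Finset.mem_Icc] at hs'
        simp only [Finset.mem_Icc]
        refine ⟨hs'.1.1, ?_⟩
        by_contra hcc2
        have : c ≤ s' := by omega
        have := iI_mono f this
        omega
      have := Finset.card_le_card hsub
      rw [Nat.card_Icc] at this
      omega
  · -- i ≤ iI f (sig f i)
    by_contra hcon
    push_neg at hcon
    rw [hsig] at hcon
    have hsub : Finset.Icc 1 (1+c) ⊆ (Finset.Icc 1 (bDurfee f)).filter (fun s => iI f s < i) := by
      intro s' hs'
      simp only [Finset.mem_Icc] at hs'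
      simp only [Finset.mem_filter, Finset.mem_Icc]
      have := iI_mono f (show s' ≤ 1 + c from hs'.2)
      exact ⟨⟨hs'.1, by omega⟩, by omega⟩
    have := Finset.card_le_card hsub
    rw [Nat.card_Icc] at this
    omega

lemma nu_eq {f : Fin m → Fin (n+1)} {s i : ℕ} (h1 : 1 ≤ s) (h2 : s ≤ bDurfee f)
    (ha : iI f (s-1) < i) (hb : i ≤ iI f s) : nu f i = jJ f s := by
  have hi1 : 1 ≤ i := by omega
  have hik : i ≤ iI f (bDurfee f) := le_trans hb (iI_mono f h2)
  unfold nu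
  rw [if_pos ⟨by omega, hi1, hik⟩, sig_eq h1 h2 ha hb]

lemma nu_iI {f : Fin m → Fin (n+1)} {s : ℕ} (h1 : 1 ≤ s) (h2 : s ≤ bDurfee f) :
    nu f (iI f s) = jJ f s :=
  nu_eq h1 h2 (iI_lt_iI f (by omega)) (le_refl _)

lemma nu_zero_of_gt {f : Fin m → Fin (n+1)} {i : ℕ} (h : iI f (bDurfee f) < i) :
    nu f i = 0 := by
  unfold nu
  exact if_neg (by rintro ⟨-, -, h3⟩; omega)

lemma nu_zero_kk0 {f : Fin m → Fin (n+1)} (h : bDurfee f = 0) (i : ℕ) : nu f i = 0 := by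
  unfold nu
  exact if_neg (by rintro ⟨h1, -, -⟩; omega)

lemma nu_anti {f : Fin m → Fin (n+1)} (hf : IsPart m n f) {i i' : ℕ}
    (h1 : 1 ≤ i) (h : i ≤ i') : nu f i' ≤ nu f i := by
  by_cases hk : 1 ≤ bDurfee f
  · by_cases hik : i' ≤ iI f (bDurfee f)
    · have hi : i ≤ iI f (bDurfee f) := le_trans h hik
      have hguard : nu f i = jJ f (sig f i) := by
        unfold nu; rw [if_pos ⟨hk, h1, hi⟩]
      have hguard' : nu f i' = jJ f (sig f i') := by
        unfold nu; rw [if_pos ⟨hk, by omega, hik⟩]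
      have hs := sig_le_kk hk hi
      have hs' := sig_le_kk hk hik
      have hmono : sig f i ≤ sig f i' := by
        unfold sig
        have : ((Finset.Icc 1 (bDurfee f)).filter (fun s => iI f s < i))
            ⊆ ((Finset.Icc 1 (bDurfee f)).filter (fun s => iI f s < i')) := by
          intro s hsmem
          simp only [Finset.mem_filter] at hsmem ⊢
          exact ⟨hsmem.1, by omega⟩
        have := Finset.card_le_card this
        omega
      rcases Nat.eq_or_lt_of_le hmono with he | hl
      · rw [hguard, hguard', he]
      · rw [hguard, hguard']
        exact le_of_lt (jJ_lt_jJ hf (sig_pos f i) hl hs')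
    · rw [nu_zero_of_gt (by omega)]
      exact Nat.zero_le _
  · rw [nu_zero_kk0 (by omega), nu_zero_kk0 (by omega)]

lemma nu_le_n (f : Fin m → Fin (n+1)) (i : ℕ) : nu f i ≤ n := by
  unfold nu
  split
  · unfold jJ
    have h1 := bent_le_n f (sig f i)
    have h2 := kk_le_n f
    have h3 := sig_pos f i
    omega
  · exact Nat.zero_le _

/-- The bijection. -/
def Phi (f : Fin m → Fin (n+1)) : Fin m → Fin (n+1) :=
  fun i => ⟨nu f (i.val + 1), Nat.lt_succ_of_le (nu_le_n f _)⟩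

lemma bent_Phi (f : Fin m → Fin (n+1)) (i : ℕ) : bent (Phi f) i = nu f i := by
  unfold bent
  by_cases h : 1 ≤ i ∧ i ≤ m
  · rw [dif_pos h]
    show nu f (i - 1 + 1) = nu f i
    congr 1
    omega
  · rw [dif_neg h]
    by_cases hi : i = 0
    · subst hi
      symm
      unfold nu
      exact if_neg (by rintro ⟨-, h2, -⟩; omega)
    · have hgt : m < i := by omega
      have := iI_kk_le_m f
      exact (nu_zero_of_gt (by omega)).symm

lemma isPart_Phi {f : Fin m → Fin (n+1)} (hf : IsPart m n f) : IsPart m n (Phi f) := by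
  intro i i' h
  have hv : (i : ℕ) ≤ (i' : ℕ) := h
  show Phi f i' ≤ Phi f i
  simp only [Phi, Fin.mk_le_mk]
  exact nu_anti hf (by omega) (by omega)

end S2

namespace S2

variable {m n : ℕ}

lemma iI_inj (f : Fin m → Fin (n+1)) {s s' : ℕ} (h : iI f s = iI f s') : s = s' := by
  rcases lt_trichotomy s s' with hl | he | hl
  · have := iI_lt_iI f hl; omega
  · exact he
  · have := iI_lt_iI f hl; omega

lemma iI_ge (f : Fin m → Fin (n+1)) (s : ℕ) : s ≤ iI f s := by
  unfold iI; omega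

lemma cor_Phi {f : Fin m → Fin (n+1)} (hf : IsPart m n f) :
    bCor (Phi f) = (Finset.Icc 1 (bDurfee f)).image (fun s => (iI f s, jJ f s)) := by
  ext p
  obtain ⟨i, j⟩ := p
  simp only [bCor, Finset.mem_filter, Finset.mem_product, Finset.mem_Icc, Finset.mem_image,
    bent_Phi]
  constructor
  · rintro ⟨⟨⟨hi1, him⟩, ⟨hj1, hjn⟩⟩, hle, hlt, hlt2⟩
    have hk : 1 ≤ bDurfee f := by
      by_contra hk0
      rw [nu_zero_kk0 (by omega)] at hle
      omega
    have hguard : i ≤ iI f (bDurfee f) := by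
      by_contra hcon
      rw [nu_zero_of_gt (by omega)] at hle
      omega
    obtain ⟨hsa, hsb⟩ := sig_spec hf hk hi1 hguard
    have hs1 := sig_pos f i
    have hsk := sig_le_kk hk hguard
    have hnui : nu f i = jJ f (sig f i) := by
      unfold nu; rw [if_pos ⟨hk, hi1, hguard⟩]
    have hieq : i = iI f (sig f i) := by
      by_contra hcon
      have : nu f (i+1) = jJ f (sig f i) := nu_eq hs1 hsk (by omega) (by omega)
      omega
    refine ⟨sig f i, ⟨hs1, hsk⟩, ?_⟩
    have hjeq : j = jJ f (sig f i) := by omega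
    rw [← hieq, ← hjeq]
  · rintro ⟨s, ⟨hs1, hsk⟩, heq⟩
    rw [Prod.ext_iff] at heq
    obtain ⟨hieq, hjeq⟩ := heq
    dsimp at hieq hjeq
    have hk : 1 ≤ bDurfee f := by omega
    have hnu : nu f (iI f s) = jJ f s := nu_iI hs1 hsk
    have hnext : nu f (iI f s + 1) < jJ f s := by
      rcases Nat.eq_or_lt_of_le hsk with hse | hsl
      · have h0 : nu f (iI f s + 1) = 0 := nu_zero_of_gt (by rw [hse]; omega)
        have := jJ_pos f hsk
        omega
      · have hlt := iI_lt_iI f (lt_add_one s)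
        have heq2 : nu f (iI f s + 1) = jJ f (s+1) :=
          nu_eq (by omega) (by omega) (by simp) (by omega)
        rw [heq2]
        exact jJ_lt_jJ hf hs1 (lt_add_one s) (by omega)
    have hge := iI_ge f s
    have hle2 : iI f s ≤ m := le_trans (iI_mono f hsk) (iI_kk_le_m f)
    have hjp := jJ_pos f hsk
    have hjn := jJ_le_n f hs1
    subst hieq hjeq
    exact ⟨⟨⟨by omega, hle2⟩, ⟨hjp, hjn⟩⟩, by omega, by omega, by omega⟩

lemma card_cor_Phi {f : Fin m → Fin (n+1)} (hf : IsPart m n f) :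
    (bCor (Phi f)).card = bDurfee f := by
  rw [cor_Phi hf, Finset.card_image_of_injOn, Nat.card_Icc]
  · omega
  · intro s _ s' _ h
    exact iI_inj f (congrArg Prod.fst h)

lemma bArea_eq (f : Fin m → Fin (n+1)) : bArea f = ∑ i ∈ Finset.Icc 1 m, bent f i := by
  unfold bArea
  rw [← Finset.Ico_add_one_right_eq_Icc, Finset.sum_Ico_eq_sum_range]
  have h1 : ∀ i : Fin m, (f i : ℕ) = bent f (1 + i.val) := by
    intro i
    unfold bent
    rw [dif_pos ⟨by omega, by omega⟩]
    congr 1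
    apply Fin.ext
    simp
  rw [Finset.sum_congr rfl (fun i _ => h1 i)]
  rw [Fin.sum_univ_eq_sum_range (fun i => bent f (1 + i)) m]
  congr 1

lemma sum_split {k : ℕ} (hk : k ≤ m) (g : ℕ → ℕ) :
    ∑ i ∈ Finset.Icc 1 m, g i
      = ∑ i ∈ Finset.Icc 1 k, g i + ∑ i ∈ Finset.Icc (k + 1) m, g i := by
  have h := Finset.sum_Ioc_consecutive g (Nat.zero_le k) hk
  rw [← Finset.Icc_add_one_left_eq_Ioc 0 k, ← Finset.Icc_add_one_left_eq_Ioc 0 m, ← Finset.Icc_add_one_left_eq_Ioc k m] at h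
  exact h.symm

end S2

namespace S2

variable {m n : ℕ}

lemma sum_ind (k c : ℕ) (hc : c ≤ k) :
    ∑ t ∈ Finset.Icc 1 k, (if t ≤ c then 1 else 0) = c := by
  rw [← Finset.card_filter]
  have h : (Finset.Icc 1 k).filter (fun t => t ≤ c) = Finset.Icc 1 c := by
    ext t
    simp only [Finset.mem_filter, Finset.mem_Icc]
    omega
  rw [h, Nat.card_Icc]
  omega

lemma gam_sum {f : Fin m → Fin (n+1)} (hf : IsPart m n f) :
    ∑ t ∈ Finset.Icc 1 (bDurfee f), gam f t
      = ∑ r ∈ Finset.Icc (bDurfee f + 1) m, bent f r := by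
  have h1 : ∀ t, gam f t
      = ∑ r ∈ Finset.Icc (bDurfee f + 1) m, if t ≤ bent f r then 1 else 0 := by
    intro t
    unfold gam
    rw [Finset.card_filter]
  rw [Finset.sum_congr rfl (fun t _ => h1 t), Finset.sum_comm]
  apply Finset.sum_congr rfl
  intro r hr
  simp only [Finset.mem_Icc] at hr
  exact sum_ind _ _ (bent_le_kk_of_gt hf (by omega))

lemma sum_reflect (k : ℕ) (g : ℕ → ℕ) :
    ∑ s ∈ Finset.Icc 1 k, g (k + 1 - s) = ∑ t ∈ Finset.Icc 1 k, g t := by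
  refine Finset.sum_bij' (fun s _ => k + 1 - s) (fun t _ => k + 1 - t) ?_ ?_ ?_ ?_ ?_
  · intro a ha; simp only [Finset.mem_Icc] at ha ⊢; omega
  · intro a ha; simp only [Finset.mem_Icc] at ha ⊢; omega
  · intro a ha; simp only [Finset.mem_Icc] at ha; omega
  · intro a ha; simp only [Finset.mem_Icc] at ha; omega
  · intro a ha; rfl

lemma chArea_Phi {f : Fin m → Fin (n+1)} (hf : IsPart m n f) :
    bChArea (Phi f) = bArea f := by
  unfold bChArea
  rw [cor_Phi hf, Finset.sum_image (by
    intro s _ s' _ h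
    exact iI_inj f (congrArg Prod.fst h))]
  by_cases hk : 1 ≤ bDurfee f
  · have hstep : ∀ s ∈ Finset.Icc 1 (bDurfee f),
        ((iI f s, jJ f s).1 + (iI f s, jJ f s).2 - 1)
          = gam f (bDurfee f + 1 - s) + bent f s := by
      intro s hs
      simp only [Finset.mem_Icc] at hs
      have h1 := kk_le_bent hf hs.1 hs.2
      unfold iI jJ
      omega
    rw [Finset.sum_congr rfl hstep, Finset.sum_add_distrib, sum_reflect, gam_sum hf,
      bArea_eq f, sum_split (kk_le_m f) (bent f)]
    omega
  · have hk0 : bDurfee f = 0 := by omega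
    rw [hk0, Finset.Icc_eq_empty (by omega), Finset.sum_empty, bArea_eq f]
    symm
    apply Finset.sum_eq_zero
    intro i hi
    simp only [Finset.mem_Icc] at hi
    exact bent_zero_of_kk_zero hf hk0 hi.1

end S2

namespace S2

variable {m n : ℕ}

lemma gam_lower {f : Fin m → Fin (n+1)} (hf : IsPart m n f) {s t : ℕ}
    (ht : 1 ≤ t) (hs : 1 ≤ s) (h : s ≤ bent f (bDurfee f + t)) : t ≤ gam f s := by
  unfold gam
  have hmle : bDurfee f + t ≤ m := by
    by_contra hc
    have := bent_zero_of_gt f (i := bDurfee f + t) (by omega)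
    have := bent_le_kk_of_gt hf (j := bDurfee f + t) (by omega)
    omega
  have hsub : Finset.Icc (bDurfee f + 1) (bDurfee f + t)
      ⊆ (Finset.Icc (bDurfee f + 1) m).filter (fun r => s ≤ bent f r) := by
    intro r hr
    simp only [Finset.mem_Icc, Finset.mem_filter] at hr ⊢
    have := bent_anti hf (i := r) (i' := bDurfee f + t) (by omega) (by omega)
    exact ⟨⟨hr.1, by omega⟩, by omega⟩
  have hc := Finset.card_le_card hsub
  rw [Nat.card_Icc] at hc
  omega

lemma gam_upper {f : Fin m → Fin (n+1)} (hf : IsPart m n f) {s t : ℕ}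
    (ht : 1 ≤ t) (hts : t ≤ gam f s) : s ≤ bent f (bDurfee f + t) := by
  by_contra hcon
  push_neg at hcon
  have hsub : (Finset.Icc (bDurfee f + 1) m).filter (fun r => s ≤ bent f r)
      ⊆ Finset.Icc (bDurfee f + 1) (bDurfee f + t - 1) := by
    intro r hr
    simp only [Finset.mem_Icc, Finset.mem_filter] at hr ⊢
    refine ⟨hr.1.1, ?_⟩
    by_contra hc2
    have := bent_anti hf (i := bDurfee f + t) (i' := r) (by omega) (by omega)
    omega
  unfold gam at hts
  have hc := Finset.card_le_card hsub
  rw [Nat.card_Icc] at hc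
  omega

lemma bent_from_gam {f : Fin m → Fin (n+1)} (hf : IsPart m n f) {t : ℕ} (ht : 1 ≤ t) :
    ((Finset.Icc 1 (bDurfee f)).filter (fun s => t ≤ gam f s)).card
      = bent f (bDurfee f + t) := by
  have hble : bent f (bDurfee f + t) ≤ bDurfee f := bent_le_kk_of_gt hf (by omega)
  have hset : (Finset.Icc 1 (bDurfee f)).filter (fun s => t ≤ gam f s)
      = Finset.Icc 1 (bent f (bDurfee f + t)) := by
    ext s
    simp only [Finset.mem_filter, Finset.mem_Icc]
    constructor
    · rintro ⟨⟨hs1, hsk⟩, hts⟩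
      exact ⟨hs1, gam_upper hf ht hts⟩
    · rintro ⟨hs1, hsb⟩
      exact ⟨⟨hs1, le_trans hsb hble⟩, gam_lower hf ht hs1 hsb⟩
  rw [hset, Nat.card_Icc]
  omega

lemma bent_val (f : Fin m → Fin (n+1)) (x : Fin m) : bent f (x.val + 1) = (f x : ℕ) := by
  unfold bent
  rw [dif_pos ⟨by omega, by omega⟩]
  congr 1

lemma phi_inj {f f' : Fin m → Fin (n+1)} (hf : IsPart m n f) (hf' : IsPart m n f')
    (h : Phi f = Phi f') : f = f' := by
  have hnu : ∀ i, nu f i = nu f' i := fun i => by rw [← bent_Phi f i, ← bent_Phi f' i, h]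
  have hkk : bDurfee f = bDurfee f' := by
    have h1 := card_cor_Phi hf
    have h2 := card_cor_Phi hf'
    rw [h] at h1
    omega
  by_cases hk : 1 ≤ bDurfee f
  case neg =>
    funext x
    apply Fin.ext
    rw [← bent_val f x, ← bent_val f' x,
      bent_zero_of_kk_zero hf (by omega) (by omega),
      bent_zero_of_kk_zero hf' (by omega) (by omega)]
  case pos =>
  -- equality of corner pair images
  have hpairs : (Finset.Icc 1 (bDurfee f)).image (fun s => (iI f s, jJ f s))
      = (Finset.Icc 1 (bDurfee f)).image (fun s => (iI f' s, jJ f' s)) := by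
    have h1 := cor_Phi hf
    have h2 := cor_Phi hf'
    rw [h, h2, ← hkk] at h1
    exact h1.symm
  have himg : (Finset.Icc 1 (bDurfee f)).image (fun s => iI f s)
      = (Finset.Icc 1 (bDurfee f)).image (fun s => iI f' s) := by
    have := congrArg (Finset.image Prod.fst) hpairs
    rwa [Finset.image_image, Finset.image_image] at this
  have hcard : ((Finset.Icc 1 (bDurfee f)).image (fun s => iI f s)).card = bDurfee f := by
    rw [Finset.card_image_of_injOn (fun s _ s' _ hss => iI_inj f hss), Nat.card_Icc]
    omega
  have hiIfin : ∀ x : Fin (bDurfee f), iI f (x.val + 1) = iI f' (x.val + 1) := by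
    have hm1 : ∀ x : Fin (bDurfee f),
        iI f (x.val + 1) ∈ (Finset.Icc 1 (bDurfee f)).image (fun s => iI f s) := by
      intro x
      exact Finset.mem_image.mpr ⟨x.val + 1, Finset.mem_Icc.mpr ⟨by omega, by omega⟩, rfl⟩
    have hm2 : ∀ x : Fin (bDurfee f),
        iI f' (x.val + 1) ∈ (Finset.Icc 1 (bDurfee f)).image (fun s => iI f s) := by
      intro x
      rw [himg]
      exact Finset.mem_image.mpr ⟨x.val + 1, Finset.mem_Icc.mpr ⟨by omega, by omega⟩, rfl⟩
    have hsm : StrictMono (fun x : Fin (bDurfee f) => iI f (x.val + 1)) := by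
      intro x y hxy
      exact iI_lt_iI f (by
        have : (x : ℕ) < y := hxy
        omega)
    have hsm' : StrictMono (fun x : Fin (bDurfee f) => iI f' (x.val + 1)) := by
      intro x y hxy
      exact iI_lt_iI f' (by
        have : (x : ℕ) < y := hxy
        omega)
    have he := Finset.orderEmbOfFin_unique hcard hm1 hsm
    have he' := Finset.orderEmbOfFin_unique hcard hm2 hsm'
    intro x
    rw [show iI f (x.val + 1) = _ from congrFun he x,
      show iI f' (x.val + 1) = _ from congrFun he' x]
  have hiI : ∀ s, 1 ≤ s → s ≤ bDurfee f → iI f s = iI f' s := by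
    intro s h1 h2
    have := hiIfin ⟨s - 1, by omega⟩
    simpa [Nat.sub_add_cancel h1] using this
  have hgam : ∀ t, 1 ≤ t → t ≤ bDurfee f → gam f t = gam f' t := by
    intro t ht1 htk
    have h1 := hiI (bDurfee f + 1 - t) (by omega) (by omega)
    unfold iI at h1
    rw [show bDurfee f + 1 - (bDurfee f + 1 - t) = t from by omega] at h1
    rw [← hkk, show bDurfee f + 1 - (bDurfee f + 1 - t) = t from by omega] at h1
    omega
  have hbent1 : ∀ s, 1 ≤ s → s ≤ bDurfee f → bent f s = bent f' s := by
    intro s h1 h2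
    have hj : jJ f s = jJ f' s := by
      have e1 := nu_iI (f := f) h1 h2
      have e2 := nu_iI (f := f') h1 (hkk ▸ h2)
      rw [← e1, ← e2, hnu, hiI s h1 h2]
    unfold jJ at hj
    have hb1 := kk_le_bent hf h1 h2
    have hb2 := kk_le_bent hf' h1 (hkk ▸ h2)
    rw [← hkk] at hb2 hj
    omega
  have hbent2 : ∀ t, 1 ≤ t → bent f (bDurfee f + t) = bent f' (bDurfee f + t) := by
    intro t ht
    have e1 := bent_from_gam hf ht
    have e2 := bent_from_gam hf' ht
    rw [← hkk] at e2
    rw [← e1, ← e2]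
    apply congrArg
    apply Finset.filter_congr
    intro s hs
    simp only [Finset.mem_Icc] at hs
    rw [hgam s hs.1 hs.2]
  funext x
  apply Fin.ext
  rw [← bent_val f x, ← bent_val f' x]
  by_cases hx : x.val + 1 ≤ bDurfee f
  · exact hbent1 (x.val + 1) (by omega) hx
  · have := hbent2 (x.val + 1 - bDurfee f) (by omega)
    rw [show bDurfee f + (x.val + 1 - bDurfee f) = x.val + 1 from by omega] at this
    exact this

end S2

/-- For all positive integers `m, n`, as polynomials in `q = X 0` and `t = X 1`,
`Σ_{λ ∈ P(m,n)} q^{|λ|} t^{d(λ)} = Σ_{λ ∈ P(m,n)} q^{|λ|_c} t^{cor(λ)}`. -/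
theorem statement2 (m n : ℕ) (hm : 0 < m) (hn : 0 < n) :
    ∑ f ∈ Finset.univ.filter (IsPart m n),
        (MvPolynomial.X 0 : MvPolynomial (Fin 2) ℤ) ^ bArea f * MvPolynomial.X 1 ^ bDurfee f
      = ∑ f ∈ Finset.univ.filter (IsPart m n),
        (MvPolynomial.X 0 : MvPolynomial (Fin 2) ℤ) ^ bChArea f *
          MvPolynomial.X 1 ^ (bCor f).card := by
  have hi : ∀ a ∈ Finset.univ.filter (IsPart m n),
      S2.Phi a ∈ Finset.univ.filter (IsPart m n) := by
    intro a ha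
    simp only [Finset.mem_filter, Finset.mem_univ, true_and] at ha ⊢
    exact S2.isPart_Phi ha
  have hinj : ∀ a₁ ∈ Finset.univ.filter (IsPart m n), ∀ a₂ ∈ Finset.univ.filter (IsPart m n),
      S2.Phi a₁ = S2.Phi a₂ → a₁ = a₂ := by
    intro a₁ ha₁ a₂ ha₂ heq
    simp only [Finset.mem_filter, Finset.mem_univ, true_and] at ha₁ ha₂
    exact S2.phi_inj ha₁ ha₂ heq
  refine Finset.sum_bij (fun a _ => S2.Phi a) hi
    (fun a₁ ha₁ a₂ ha₂ heq => hinj a₁ ha₁ a₂ ha₂ heq) ?_ ?_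
  · intro b hb
    obtain ⟨a, ha, hba⟩ := Finset.surj_on_of_inj_on_of_card_le (fun a _ => S2.Phi a) hi
      (fun a₁ a₂ ha₁ ha₂ heq => hinj a₁ ha₁ a₂ ha₂ heq) (le_refl _) b hb
    exact ⟨a, ha, hba.symm⟩
  · intro a ha
    simp only [Finset.mem_filter, Finset.mem_univ, true_and] at ha
    rw [S2.chArea_Phi ha, S2.card_cor_Phi ha]
end
end

section
/- For all n, k ≥ 1, the number of partitions λ with area |λ| = n and Durfee square side d(λ) = k equals the number of partitions λ with cohook area |λ|_c = n and number of corners cor(λ) = k; that is, p(n,k) = q(n,k). -/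
attribute [local instance] Classical.propDecidable

noncomputable section

/-- A partition, recorded by its weakly decreasing, finitely supported sequence of
parts `λ_{i+1} = f i` (0-indexed). -/
def IsPartition (f : ℕ →₀ ℕ) : Prop := ∀ i j : ℕ, i ≤ j → f j ≤ f i

/-- The area `|λ| = Σ_i λ_i`. -/
def parea (f : ℕ →₀ ℕ) : ℕ := ∑ i ∈ f.support, f i

/-- The Durfee square side: the largest `k` with `λ_k ≥ k`. -/
def pdurfee (f : ℕ →₀ ℕ) : ℕ := sSup {k : ℕ | 1 ≤ k ∧ k ≤ f (k - 1)}

/-- The conjugate partition: `pconj f j = λ'_j = #{i : λ_i ≥ j}` (for `j ≥ 1`). -/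
def pconj (f : ℕ →₀ ℕ) (j : ℕ) : ℕ := (f.support.filter (fun r => j ≤ f r)).card

/-- The set of corners of a partition: the cells `(i,j) ∈ D(λ)` (1-based, so
`1 ≤ j ≤ λ_i`) with `(i+1,j) ∉ D(λ)` and `(i,j+1) ∉ D(λ)`. -/
def pcorners (f : ℕ →₀ ℕ) : Finset (ℕ × ℕ) :=
  ((f.support.image (· + 1)) ×ˢ Finset.Icc 1 (f 0)).filter
    (fun p => p.2 ≤ f (p.1 - 1) ∧ f p.1 < p.2 ∧ f (p.1 - 1) < p.2 + 1)

/-- The cohook area `|λ|_c = Σ_{(i,j) ∈ Cor(λ)} (i + j - 1)`. -/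
def pchArea (f : ℕ →₀ ℕ) : ℕ := ∑ p ∈ pcorners f, (p.1 + p.2 - 1)

lemma downclosed_mem_iff (S : Finset ℕ) (h : ∀ r ∈ S, ∀ r', r' ≤ r → r' ∈ S) (m : ℕ) :
    m ∈ S ↔ m < S.card := by
  constructor
  · intro hm
    have hsub : Finset.range (m + 1) ⊆ S := by
      intro r hr
      exact h m hm r (by simpa using Nat.lt_succ_iff.mp (Finset.mem_range.mp hr))
    have := Finset.card_le_card hsub
    simpa using this
  · intro hm
    by_contra hmem
    have hsub : S ⊆ Finset.range m := by
      intro r hr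
      rw [Finset.mem_range]
      by_contra hrm
      exact hmem (h r hr m (by omega))
    have := Finset.card_le_card hsub
    simp at this
    omega

lemma downclosed_mem_iff_fin {k : ℕ} (S : Finset (Fin k))
    (h : ∀ r ∈ S, ∀ r', r' ≤ r → r' ∈ S) (i : Fin k) :
    i ∈ S ↔ (i : ℕ) < S.card := by
  set S' : Finset ℕ := S.image Fin.val with hS'
  have hcard : S'.card = S.card := Finset.card_image_of_injective _ Fin.val_injective
  have hdc : ∀ r ∈ S', ∀ r', r' ≤ r → r' ∈ S' := by
    intro r hr r' hr'
    rw [hS', Finset.mem_image] at hr ⊢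
    obtain ⟨a, ha, rfl⟩ := hr
    exact ⟨⟨r', by omega⟩, h a ha _ (by simp [Fin.le_def]; omega), rfl⟩
  have := downclosed_mem_iff S' hdc (i : ℕ)
  rw [hcard] at this
  rw [← this, hS', Finset.mem_image]
  constructor
  · intro hi; exact ⟨i, hi, rfl⟩
  · rintro ⟨a, ha, hav⟩; rwa [show i = a from Fin.ext hav.symm]

lemma card_filter_val_lt (k m : ℕ) :
    (Finset.univ.filter fun i : Fin k => (i : ℕ) < m).card = min m k := by
  have himg : (Finset.univ.filter fun i : Fin k => (i : ℕ) < m).image Fin.val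
      = Finset.range (min m k) := by
    ext r
    simp only [Finset.mem_image, Finset.mem_filter, Finset.mem_univ, true_and,
      Finset.mem_range]
    constructor
    · rintro ⟨i, hi, rfl⟩; omega
    · intro hr; exact ⟨⟨r, by omega⟩, by simp; omega, rfl⟩
  have := Finset.card_image_of_injective
    (Finset.univ.filter fun i : Fin k => (i : ℕ) < m) Fin.val_injective
  rw [himg] at this
  simpa using this.symm

lemma support_filter_eq (f : ℕ →₀ ℕ) {j : ℕ} (hj : 1 ≤ j) (S : Finset ℕ)
    (hS : ∀ r, j ≤ f r → r ∈ S) :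
    S.filter (fun r => j ≤ f r) = f.support.filter (fun r => j ≤ f r) := by
  ext r
  simp only [Finset.mem_filter, Finsupp.mem_support_iff]
  constructor
  · rintro ⟨_, h2⟩; exact ⟨by omega, h2⟩
  · rintro ⟨_, h2⟩; exact ⟨hS r h2, h2⟩

lemma le_iff_lt_pconj {f : ℕ →₀ ℕ} (hf : IsPartition f) {j : ℕ} (hj : 1 ≤ j) (r : ℕ) :
    j ≤ f r ↔ r < pconj f j := by
  have hdc : ∀ a ∈ f.support.filter (fun r => j ≤ f r), ∀ a', a' ≤ a →
      a' ∈ f.support.filter (fun r => j ≤ f r) := by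
    intro a ha a' ha'
    simp only [Finset.mem_filter, Finsupp.mem_support_iff] at ha ⊢
    have := hf a' a ha'
    constructor
    · omega
    · omega
  have := downclosed_mem_iff _ hdc r
  rw [Finset.mem_filter, Finsupp.mem_support_iff] at this
  unfold pconj
  rw [← this]
  constructor
  · intro h; exact ⟨by omega, h⟩
  · rintro ⟨_, h⟩; exact h

lemma filter_le_eq_range {f : ℕ →₀ ℕ} (hf : IsPartition f) {j : ℕ} (hj : 1 ≤ j) :
    f.support.filter (fun r => j ≤ f r) = Finset.range (pconj f j) := by
  ext r
  rw [Finset.mem_range, ← le_iff_lt_pconj hf hj]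
  simp only [Finset.mem_filter, Finsupp.mem_support_iff]
  constructor
  · rintro ⟨_, h⟩; exact h
  · intro h; exact ⟨by omega, h⟩

lemma sum_eq_sum_card {S : Finset ℕ} {f : ℕ →₀ ℕ} {k : ℕ} (h : ∀ r ∈ S, f r ≤ k) :
    ∑ r ∈ S, f r = ∑ j ∈ Finset.Icc 1 k, (S.filter (fun r => j ≤ f r)).card := by
  have : ∀ j, (S.filter (fun r => j ≤ f r)).card = ∑ r ∈ S, if j ≤ f r then 1 else 0 := by
    intro j; rw [Finset.card_filter]
  simp only [this]
  rw [Finset.sum_comm]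
  apply Finset.sum_congr rfl
  intro r hr
  have : ∑ j ∈ Finset.Icc 1 k, (if j ≤ f r then 1 else 0)
      = ((Finset.Icc 1 k).filter (fun j => j ≤ f r)).card := by
    rw [Finset.card_filter]
  rw [this]
  have : (Finset.Icc 1 k).filter (fun j => j ≤ f r) = Finset.Icc 1 (f r) := by
    ext j
    simp only [Finset.mem_filter, Finset.mem_Icc]
    have := h r hr
    omega
  rw [this]
  simp

lemma sum_card_eq_sum_fin {k M : ℕ} (u : Fin k → ℕ) (h : ∀ i, u i ≤ M) :
    ∑ s ∈ Finset.range M, (Finset.univ.filter fun i : Fin k => s < u i).card = ∑ i, u i := by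
  have : ∀ s, (Finset.univ.filter fun i : Fin k => s < u i).card
      = ∑ i : Fin k, if s < u i then 1 else 0 := by
    intro s; rw [Finset.card_filter]
  simp only [this]
  rw [Finset.sum_comm]
  apply Finset.sum_congr rfl
  intro i _
  have : ∑ s ∈ Finset.range M, (if s < u i then 1 else 0)
      = ((Finset.range M).filter (fun s => s < u i)).card := by
    rw [Finset.card_filter]
  rw [this]
  have : (Finset.range M).filter (fun s => s < u i) = Finset.range (u i) := by
    ext s
    simp only [Finset.mem_filter, Finset.mem_range]
    have := h i
    omega
  rw [this]
  simp

lemma pdurfee_eq_iff {f : ℕ →₀ ℕ} (hf : IsPartition f) {k : ℕ} (hk : 1 ≤ k) :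
    pdurfee f = k ↔ (k ≤ f (k - 1) ∧ f k ≤ k) := by
  have hbdd : BddAbove {m : ℕ | 1 ≤ m ∧ m ≤ f (m - 1)} := by
    refine ⟨f 0, ?_⟩
    rintro m ⟨h1, h2⟩
    calc m ≤ f (m - 1) := h2
    _ ≤ f 0 := hf 0 (m-1) (by omega)
  rw [pdurfee]
  constructor
  · intro h
    have hne : {m : ℕ | 1 ≤ m ∧ m ≤ f (m - 1)}.Nonempty := by
      by_contra hne
      rw [Set.not_nonempty_iff_eq_empty] at hne
      rw [hne] at h
      simp [sSup_empty] at h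
      omega
    have hmem : k ∈ {m : ℕ | 1 ≤ m ∧ m ≤ f (m - 1)} := by
      rw [← h]
      exact Nat.sSup_mem hne hbdd
    obtain ⟨_, h2⟩ := hmem
    refine ⟨h2, ?_⟩
    by_contra hc
    have hmem2 : k + 1 ∈ {m : ℕ | 1 ≤ m ∧ m ≤ f (m - 1)} := by
      refine ⟨by omega, ?_⟩
      simp only [Nat.add_sub_cancel]
      omega
    have := le_csSup hbdd hmem2
    omega
  · rintro ⟨h1, h2⟩
    have hmem : k ∈ {m : ℕ | 1 ≤ m ∧ m ≤ f (m - 1)} := ⟨hk, h1⟩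
    apply le_antisymm
    · apply csSup_le ⟨k, hmem⟩
      rintro m ⟨hm1, hm2⟩
      by_contra hmk
      have : f (m - 1) ≤ f k := hf k (m-1) (by omega)
      omega
    · exact le_csSup hbdd hmem

/-- the descent set of a partition -/
def Dset (f : ℕ →₀ ℕ) : Finset ℕ := f.support.filter (fun r => f (r + 1) < f r)

lemma pcorners_eq {f : ℕ →₀ ℕ} (hf : IsPartition f) :
    pcorners f = (Dset f).image (fun r => (r + 1, f r)) := by
  ext ⟨p1, p2⟩
  simp only [pcorners, Dset, Finset.mem_filter, Finset.mem_image, Finset.mem_product,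
    Finset.mem_Icc, Finsupp.mem_support_iff]
  constructor
  · rintro ⟨⟨⟨r, hr, rfl⟩, hp2a, hp2b⟩, hc1, hc2, hc3⟩
    simp only [Nat.add_sub_cancel] at hc1 hc3
    refine ⟨r, ⟨hr, by omega⟩, ?_⟩
    rw [Prod.mk.injEq]
    exact ⟨rfl, by omega⟩
  · rintro ⟨r, ⟨hr, hdesc⟩, heq⟩
    obtain ⟨rfl, rfl⟩ : r + 1 = p1 ∧ f r = p2 := by
      rw [Prod.mk.injEq] at heq; exact heq
    simp only [Nat.add_sub_cancel]
    have h0 : f r ≤ f 0 := hf 0 r (Nat.zero_le r)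
    exact ⟨⟨⟨r, hr, rfl⟩, by omega, h0⟩, le_refl _, hdesc, by omega⟩

lemma pcorners_card {f : ℕ →₀ ℕ} (hf : IsPartition f) :
    (pcorners f).card = (Dset f).card := by
  rw [pcorners_eq hf]
  apply Finset.card_image_of_injOn
  intro a _ b _ hab
  simpa using (Prod.ext_iff.mp hab).1

lemma pchArea_eq {f : ℕ →₀ ℕ} (hf : IsPartition f) :
    pchArea f = ∑ r ∈ Dset f, (r + f r) := by
  rw [pchArea, pcorners_eq hf, Finset.sum_image]
  · apply Finset.sum_congr rfl
    intro r _
    omega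
  · intro a _ b _ hab
    simpa using (Prod.ext_iff.mp hab).1

/-- no descents in [s,m) implies value doesn't drop -/
lemma no_descent_le (f : ℕ →₀ ℕ) (s : ℕ) :
    ∀ m, s ≤ m → (∀ r, s ≤ r → r < m → f r ≤ f (r + 1)) → f s ≤ f m := by
  intro m
  induction m with
  | zero =>
    intro h1 _
    have : s = 0 := by omega
    subst this; exact le_rfl
  | succ m ih =>
    intro h1 h2
    rcases Nat.lt_or_ge s (m+1) with hlt | hge
    · calc f s ≤ f m := ih (by omega) (fun r a b => h2 r a (by omega))
      _ ≤ f (m+1) := h2 m (by omega) (by omega)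
    · have : s = m + 1 := by omega
      subst this; exact le_rfl

lemma exists_descent {f : ℕ →₀ ℕ} {s m : ℕ} (hsm : s ≤ m) (hlt : f m < f s) :
    ∃ r, s ≤ r ∧ r < m ∧ f (r + 1) < f r := by
  by_contra hc
  push_neg at hc
  have := no_descent_le f s m hsm (fun r h1 h2 => hc r h1 h2)
  omega

lemma strictMono_fin_le {k : ℕ} {d : Fin k → ℕ} (h : StrictMono d) (i j : Fin k)
    (hij : i ≤ j) : (j : ℕ) - (i : ℕ) + d i ≤ d j := by
  obtain ⟨m, hm⟩ : ∃ m, (j : ℕ) = (i : ℕ) + m := ⟨(j : ℕ) - i, by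
    have := Fin.le_def.mp hij; omega⟩
  induction m generalizing j with
  | zero => have : i = j := Fin.ext (by omega); subst this; omega
  | succ m ih =>
    have hjpos : 0 < (j : ℕ) := by omega
    have hjk : (j : ℕ) - 1 < k := by omega
    have h1 : d ⟨(j : ℕ) - 1, hjk⟩ < d j := h (by rw [Fin.lt_def]; simp; omega)
    have h2 := ih ⟨(j : ℕ) - 1, hjk⟩ (by rw [Fin.le_def]; simp; omega) (by simp; omega)
    simp only [Fin.val_mk] at h2
    omega

lemma strictAnti_fin_le {k : ℕ} {c : Fin k → ℕ} (h : StrictAnti c) (i j : Fin k)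
    (hij : i ≤ j) : (j : ℕ) - (i : ℕ) + c j ≤ c i := by
  obtain ⟨m, hm⟩ : ∃ m, (j : ℕ) = (i : ℕ) + m := ⟨(j : ℕ) - i, by
    have := Fin.le_def.mp hij; omega⟩
  induction m generalizing j with
  | zero => have : i = j := Fin.ext (by omega); subst this; omega
  | succ m ih =>
    have hjpos : 0 < (j : ℕ) := by omega
    have hjk : (j : ℕ) - 1 < k := by omega
    have h1 : c j < c ⟨(j : ℕ) - 1, hjk⟩ := h (by rw [Fin.lt_def]; simp; omega)
    have h2 := ih ⟨(j : ℕ) - 1, hjk⟩ (by rw [Fin.le_def]; simp; omega) (by simp; omega)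
    simp only [Fin.val_mk] at h2
    omega

section PX

variable {k : ℕ}

def mkP (k : ℕ) (a u : Fin k → ℕ) : ℕ →₀ ℕ :=
  Finsupp.onFinset (Finset.range (k + ∑ i, u i))
    (fun r => if h : r < k then a ⟨r, h⟩ + k
      else (Finset.univ.filter fun i : Fin k => r - k < u i).card)
    (by
      intro r hr
      rw [Finset.mem_range]
      by_cases h : r < k
      · omega
      · simp only [dif_neg h] at hr
        obtain ⟨i, hi⟩ := Finset.card_ne_zero.mp hr
        rw [Finset.mem_filter] at hi
        have : u i ≤ ∑ i, u i := Finset.single_le_sum (fun _ _ => Nat.zero_le _)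
          (Finset.mem_univ i)
        omega)

lemma mkP_lt (a u : Fin k → ℕ) {r : ℕ} (h : r < k) : mkP k a u r = a ⟨r, h⟩ + k := by
  simp [mkP, h]

lemma mkP_ge (a u : Fin k → ℕ) {r : ℕ} (h : k ≤ r) :
    mkP k a u r = (Finset.univ.filter fun i : Fin k => r - k < u i).card := by
  simp [mkP, Nat.not_lt.mpr h]

lemma mkP_isPartition (a u : Fin k → ℕ) (ha : Antitone a) : IsPartition (mkP k a u) := by
  intro i j hij
  by_cases hik : i < k
  · by_cases hjk : j < k
    · rw [mkP_lt a u hik, mkP_lt a u hjk]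
      have := ha (show (⟨i, hik⟩ : Fin k) ≤ ⟨j, hjk⟩ by rw [Fin.le_def]; exact hij)
      omega
    · rw [mkP_lt a u hik, mkP_ge a u (by omega)]
      have := Finset.card_filter_le Finset.univ (fun i : Fin k => j - k < u i)
      simp at this
      omega
  · rw [mkP_ge a u (by omega), mkP_ge a u (by omega)]
    apply Finset.card_le_card
    intro x hx
    rw [Finset.mem_filter] at hx ⊢
    exact ⟨hx.1, by have := hx.2; omega⟩

lemma mkP_pdurfee (a u : Fin k → ℕ) (hk : 1 ≤ k) (ha : Antitone a) :
    pdurfee (mkP k a u) = k := by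
  rw [pdurfee_eq_iff (mkP_isPartition a u ha) hk]
  constructor
  · rw [mkP_lt a u (show k - 1 < k by omega)]
    omega
  · rw [mkP_ge a u le_rfl]
    have := Finset.card_filter_le Finset.univ (fun i : Fin k => k - k < u i)
    simpa using this

lemma mkP_mem_iff (a u : Fin k → ℕ) (hu : Antitone u) (s : ℕ) (i : Fin k) :
    s < u i ↔ (i : ℕ) < mkP k a u (k + s) := by
  rw [mkP_ge a u (by omega)]
  simp only [Nat.add_sub_cancel_left]
  have hdc : ∀ r ∈ Finset.univ.filter fun i : Fin k => s < u i, ∀ r', r' ≤ r →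
      r' ∈ Finset.univ.filter fun i : Fin k => s < u i := by
    intro r hr r' hr'
    rw [Finset.mem_filter] at hr ⊢
    have := hu hr'
    exact ⟨Finset.mem_univ _, by omega⟩
  have := downclosed_mem_iff_fin _ hdc i
  rw [Finset.mem_filter] at this
  rw [← this]
  simp

lemma mkP_pconj (a u : Fin k → ℕ) (hu : Antitone u) (i : Fin k) :
    pconj (mkP k a u) ((i : ℕ) + 1) = k + u i := by
  have hrange : (Finset.range (k + ∑ i, u i)).filter (fun r => (i : ℕ) + 1 ≤ mkP k a u r)
      = Finset.range (k + u i) := by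
    ext r
    simp only [Finset.mem_filter, Finset.mem_range]
    have hiu : u i ≤ ∑ i, u i := Finset.single_le_sum (fun _ _ => Nat.zero_le _)
      (Finset.mem_univ i)
    by_cases h : r < k
    · rw [mkP_lt a u h]
      constructor
      · intro; omega
      · intro; exact ⟨by omega, by omega⟩
    · have hr : r = k + (r - k) := by omega
      constructor
      · rintro ⟨h1, h2⟩
        have := (mkP_mem_iff a u hu (r - k) i).mpr (by rw [← hr]; omega)
        omega
      · intro h1
        have := (mkP_mem_iff a u hu (r - k) i).mp (by omega)
        rw [← hr] at this
        exact ⟨by omega, by omega⟩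
  rw [pconj, ← support_filter_eq _ (by omega) _ (fun r hr => by
    have hsupp : r ∈ (mkP k a u).support := Finsupp.mem_support_iff.mpr (by omega)
    have := Finsupp.support_onFinset_subset hsupp
    exact this), hrange]
  simp

lemma mkP_parea (a u : Fin k → ℕ) (ha : Antitone a) :
    parea (mkP k a u) = k * k + ∑ i, a i + ∑ i, u i := by
  rw [parea]
  have hsub : (mkP k a u).support ⊆ Finset.range (k + ∑ i, u i) :=
    Finsupp.support_onFinset_subset
  rw [Finset.sum_subset hsub (fun x _ hx => Finsupp.notMem_support_iff.mp hx)]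
  rw [Finset.range_eq_Ico, ← Finset.sum_Ico_consecutive _ (Nat.zero_le k) (by omega)]
  have h1 : ∑ r ∈ Finset.Ico 0 k, mkP k a u r = k * k + ∑ i, a i := by
    rw [← Finset.range_eq_Ico, ← Fin.sum_univ_eq_sum_range]
    have : ∀ i : Fin k, mkP k a u (i : ℕ) = a i + k := by
      intro i
      rw [mkP_lt a u i.isLt]
    rw [Finset.sum_congr rfl (fun i _ => this i), Finset.sum_add_distrib]
    simp [mul_comm]
    omega
  have h2 : ∑ r ∈ Finset.Ico k (k + ∑ i, u i), mkP k a u r = ∑ i, u i := by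
    rw [Finset.sum_Ico_eq_sum_range]
    simp only [Nat.add_sub_cancel_left]
    have : ∀ s ∈ Finset.range (∑ i, u i), mkP k a u (k + s)
        = (Finset.univ.filter fun i : Fin k => s < u i).card := by
      intro s _
      rw [mkP_ge a u (by omega)]
      simp
    rw [Finset.sum_congr rfl this]
    exact sum_card_eq_sum_fin u (fun i => Finset.single_le_sum
      (fun _ _ => Nat.zero_le _) (Finset.mem_univ i))
  omega

end PX

lemma pconj_anti (f : ℕ →₀ ℕ) {j j' : ℕ} (h : j ≤ j') : pconj f j' ≤ pconj f j := by
  apply Finset.card_le_card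
  intro r hr
  rw [Finset.mem_filter] at hr ⊢
  exact ⟨hr.1, le_trans h hr.2⟩

lemma pconj_ge {f : ℕ →₀ ℕ} (hf : IsPartition f) {k : ℕ} (hk : 1 ≤ k)
    (h1 : k ≤ f (k - 1)) (i : Fin k) : k ≤ pconj f ((i : ℕ) + 1) := by
  have hsub : Finset.range k ⊆ f.support.filter (fun r => (i : ℕ) + 1 ≤ f r) := by
    intro r hr
    rw [Finset.mem_range] at hr
    have : f (k - 1) ≤ f r := hf r (k - 1) (by omega)
    rw [Finset.mem_filter, Finsupp.mem_support_iff]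
    have hik : (i : ℕ) < k := i.isLt
    exact ⟨by omega, by omega⟩
  have := Finset.card_le_card hsub
  simpa [pconj] using this

lemma parea_decomp {f : ℕ →₀ ℕ} (hf : IsPartition f) {k : ℕ} (hk : 1 ≤ k)
    (h1 : k ≤ f (k - 1)) (h2 : f k ≤ k) :
    parea f = k * k + (∑ i : Fin k, (f (i : ℕ) - k)) + ∑ i : Fin k, (pconj f ((i : ℕ) + 1) - k) := by
  rw [parea, ← Finset.sum_filter_add_sum_filter_not f.support (fun r => r < k)]
  have hA : f.support.filter (fun r => r < k) = Finset.range k := by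
    ext r
    simp only [Finset.mem_filter, Finsupp.mem_support_iff, Finset.mem_range]
    constructor
    · rintro ⟨_, h⟩; exact h
    · intro h
      have : f (k - 1) ≤ f r := hf r (k - 1) (by omega)
      exact ⟨by omega, h⟩
  have hfirst : ∑ r ∈ Finset.range k, f r = ∑ i : Fin k, (f (i : ℕ) - k) + k * k := by
    rw [← Fin.sum_univ_eq_sum_range]
    have : ∀ i : Fin k, f (i : ℕ) = (f (i : ℕ) - k) + k := by
      intro i
      have : f (k - 1) ≤ f (i : ℕ) := hf (i : ℕ) (k - 1) (by have := i.isLt; omega)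
      omega
    rw [Finset.sum_congr rfl (fun i _ => this i), Finset.sum_add_distrib]
    simp [mul_comm]
  have hsecond : ∑ r ∈ f.support.filter (fun r => ¬ r < k), f r
      = ∑ i : Fin k, (pconj f ((i : ℕ) + 1) - k) := by
    rw [sum_eq_sum_card (k := k) (fun r hr => by
      rw [Finset.mem_filter] at hr
      have := hf k r (by omega)
      omega)]
    have hIco : ∀ j ∈ Finset.Icc 1 k,
        ((f.support.filter (fun r => ¬ r < k)).filter (fun r => j ≤ f r)).card
        = pconj f j - k := by
      intro j hj
      rw [Finset.mem_Icc] at hj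
      have heq : (f.support.filter (fun r => ¬ r < k)).filter (fun r => j ≤ f r)
          = Finset.Ico k (pconj f j) := by
        ext r
        simp only [Finset.mem_filter, Finsupp.mem_support_iff, Finset.mem_Ico]
        rw [← le_iff_lt_pconj hf (by omega) r]
        constructor
        · rintro ⟨⟨_, hrk⟩, hjf⟩; exact ⟨by omega, hjf⟩
        · rintro ⟨hrk, hjf⟩; exact ⟨⟨by omega, by omega⟩, hjf⟩
      rw [heq, Nat.card_Ico]
    rw [Finset.sum_congr rfl hIco,
      show Finset.Icc 1 k = Finset.Ico 1 (k + 1) by rw [Finset.Ico_add_one_right_eq_Icc],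
      Finset.sum_Ico_eq_sum_range]
    simp only [Nat.add_sub_cancel]
    rw [← Fin.sum_univ_eq_sum_range (fun i => pconj f (1 + i) - k)]
    apply Finset.sum_congr rfl
    intro i _
    rw [Nat.add_comm 1 (i : ℕ)]
  rw [hA, hfirst, hsecond]
  omega

lemma card_P_eq (n k : ℕ) (hk : 1 ≤ k) :
    Nat.card {f : ℕ →₀ ℕ // IsPartition f ∧ parea f = n ∧ pdurfee f = k}
      = Nat.card {p : (Fin k → ℕ) × (Fin k → ℕ) //
          Antitone p.1 ∧ Antitone p.2 ∧ k * k + (∑ i, p.1 i) + (∑ i, p.2 i) = n} := by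
  apply Nat.card_congr
  refine ⟨fun ⟨f, hf, harea, hd⟩ =>
      ⟨((fun i => f (i : ℕ) - k), (fun i => pconj f ((i : ℕ) + 1) - k)), ?_, ?_, ?_⟩,
    fun ⟨⟨a, u⟩, ha, hu, hsum⟩ => ⟨mkP k a u, mkP_isPartition a u ha,
      by rw [mkP_parea a u ha]; exact hsum, mkP_pdurfee a u hk ha⟩, ?_, ?_⟩
  · intro i j hij
    simp only
    have := hf (i : ℕ) (j : ℕ) (Fin.le_def.mp hij)
    omega
  · intro i j hij
    simp only
    have := pconj_anti f (show (i : ℕ) + 1 ≤ (j : ℕ) + 1 by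
      have := Fin.le_def.mp hij; omega)
    omega
  · obtain ⟨h1, h2⟩ := (pdurfee_eq_iff hf hk).mp hd
    have := parea_decomp hf hk h1 h2
    simp only
    omega
  · rintro ⟨f, hf, harea, hd⟩
    apply Subtype.ext
    obtain ⟨h1, h2⟩ := (pdurfee_eq_iff hf hk).mp hd
    apply Finsupp.ext
    intro r
    change _ = f r
    by_cases hr : r < k
    · rw [mkP_lt _ _ hr]
      simp only [Fin.val_mk]
      have : f (k - 1) ≤ f r := hf r (k - 1) (by omega)
      omega
    · rw [mkP_ge _ _ (by omega)]
      have hfr : f r ≤ k := by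
        have := hf k r (by omega)
        omega
      have hcond : ∀ i : Fin k, (r - k < pconj f ((i : ℕ) + 1) - k) ↔ ((i : ℕ) < f r) := by
        intro i
        have hge := pconj_ge hf hk h1 i
        rw [show ((i : ℕ) < f r) ↔ ((i : ℕ) + 1 ≤ f r) by omega,
          le_iff_lt_pconj hf (by omega) r]
        omega
      have hfilt : (Finset.univ.filter fun i : Fin k =>
            r - k < (fun i : Fin k => pconj f ((i : ℕ) + 1) - k) i)
          = Finset.univ.filter fun i : Fin k => (i : ℕ) < f r := by
        apply Finset.filter_congr
        intro i _
        exact hcond i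
      rw [hfilt, card_filter_val_lt]
      omega
  · rintro ⟨⟨a, u⟩, ha, hu, hsum⟩
    apply Subtype.ext
    have h1 : (fun i : Fin k => mkP k a u (i : ℕ) - k) = a := by
      funext i
      rw [mkP_lt a u i.isLt]
      simp
    have h2 : (fun i : Fin k => pconj (mkP k a u) ((i : ℕ) + 1) - k) = u := by
      funext i
      rw [mkP_pconj a u hu i]
      simp
    simp only [h1, h2]

section QX

variable {k : ℕ}

lemma sum_rev' (b : Fin k → ℕ) : ∑ i : Fin k, b i.rev = ∑ i : Fin k, b i :=
  Fintype.sum_bijective Fin.rev Fin.rev_bijective _ _ (fun _ => rfl)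

def cQ (k : ℕ) (a : Fin k → ℕ) (i : Fin k) : ℕ := a i + (k - (i : ℕ))

def dQ (b : Fin k → ℕ) (i : Fin k) : ℕ := (i : ℕ) + b i.rev

lemma dQ_strictMono {b : Fin k → ℕ} (hb : Antitone b) : StrictMono (dQ b) := by
  intro i j hij
  have hrev : j.rev ≤ i.rev := by
    rw [Fin.le_def]
    simp [Fin.val_rev]
    have := Fin.lt_def.mp hij
    omega
  have := hb hrev
  have := Fin.lt_def.mp hij
  unfold dQ
  omega

lemma cQ_strictAnti {a : Fin k → ℕ} (ha : Antitone a) : StrictAnti (cQ k a) := by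
  intro i j hij
  have := ha (le_of_lt hij)
  have h1 := Fin.lt_def.mp hij
  have h2 := j.isLt
  unfold cQ
  omega

def mkQ (k : ℕ) (a b : Fin k → ℕ) : ℕ →₀ ℕ :=
  Finsupp.onFinset (Finset.range (k + ∑ i, b i))
    (fun s => (Finset.univ.filter fun i : Fin k => s ≤ dQ b i).sup (cQ k a))
    (by
      intro s hs
      rw [Finset.mem_range]
      rcases Finset.eq_empty_or_nonempty
        (Finset.univ.filter fun i : Fin k => s ≤ dQ b i) with he | hne
      · exfalso
        apply hs
        simp [he]
      · obtain ⟨i, hi⟩ := hne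
        rw [Finset.mem_filter] at hi
        have h1 : (i : ℕ) < k := i.isLt
        have h2 : b i.rev ≤ ∑ i, b i := Finset.single_le_sum
          (fun _ _ => Nat.zero_le _) (Finset.mem_univ i.rev)
        have := hi.2
        unfold dQ at this
        omega)

lemma mkQ_apply (a b : Fin k → ℕ) (s : ℕ) :
    mkQ k a b s = (Finset.univ.filter fun i : Fin k => s ≤ dQ b i).sup (cQ k a) := rfl

lemma mkQ_isPartition (a b : Fin k → ℕ) : IsPartition (mkQ k a b) := by
  intro s t hst
  rw [mkQ_apply, mkQ_apply]
  apply Finset.sup_mono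
  intro i hi
  rw [Finset.mem_filter] at hi ⊢
  exact ⟨hi.1, by omega⟩

lemma mkQ_eq_cQ {a b : Fin k → ℕ} (ha : Antitone a) (s : ℕ) (i₀ : Fin k)
    (h1 : s ≤ dQ b i₀) (h2 : ∀ j, s ≤ dQ b j → i₀ ≤ j) :
    mkQ k a b s = cQ k a i₀ := by
  rw [mkQ_apply]
  apply le_antisymm
  · apply Finset.sup_le
    intro j hj
    rw [Finset.mem_filter] at hj
    exact (cQ_strictAnti ha).antitone (h2 j hj.2)
  · exact Finset.le_sup (Finset.mem_filter.mpr ⟨Finset.mem_univ _, h1⟩)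

lemma mkQ_at_dQ {a b : Fin k → ℕ} (ha : Antitone a) (hb : Antitone b) (i : Fin k) :
    mkQ k a b (dQ b i) = cQ k a i :=
  mkQ_eq_cQ ha _ i le_rfl (fun j hj => ((dQ_strictMono hb).le_iff_le).mp hj)

lemma mkQ_eq_zero {a b : Fin k → ℕ} (s : ℕ) (h : ∀ i, dQ b i < s) :
    mkQ k a b s = 0 := by
  rw [mkQ_apply]
  have : (Finset.univ.filter fun i : Fin k => s ≤ dQ b i) = ∅ := by
    apply Finset.filter_eq_empty_iff.mpr
    intro i _
    have := h i
    omega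
  rw [this]
  simp

lemma mkQ_Dset {a b : Fin k → ℕ} (ha : Antitone a) (hb : Antitone b) :
    Dset (mkQ k a b) = Finset.image (dQ b) Finset.univ := by
  ext s
  rw [Dset, Finset.mem_filter, Finsupp.mem_support_iff, Finset.mem_image]
  constructor
  · rintro ⟨hne, hdesc⟩
    by_contra hc
    push_neg at hc
    by_cases hex : ∃ i, s ≤ dQ b i
    · have heq : (Finset.univ.filter fun i : Fin k => s ≤ dQ b i)
          = (Finset.univ.filter fun i : Fin k => s + 1 ≤ dQ b i) := by
        apply Finset.filter_congr
        intro i _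
        have := hc i (Finset.mem_univ i)
        constructor
        · intro h; omega
        · intro h; omega
      have : mkQ k a b s = mkQ k a b (s + 1) := by
        rw [mkQ_apply, mkQ_apply, heq]
      omega
    · push_neg at hex
      have := mkQ_eq_zero (a := a) s hex
      omega
  · rintro ⟨i, _, rfl⟩
    have hval : mkQ k a b (dQ b i) = cQ k a i := mkQ_at_dQ ha hb i
    have hpos : 0 < cQ k a i := by
      have := i.isLt
      unfold cQ
      omega
    constructor
    · omega
    · rw [hval]
      rw [mkQ_apply]
      apply Finset.sup_lt_iff (by simpa using hpos) |>.mpr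
      intro j hj
      rw [Finset.mem_filter] at hj
      have hij : i < j := by
        rw [← (dQ_strictMono hb).lt_iff_lt]
        have := hj.2
        omega
      exact cQ_strictAnti ha hij

lemma mkQ_card_Dset {a b : Fin k → ℕ} (ha : Antitone a) (hb : Antitone b) :
    (Dset (mkQ k a b)).card = k := by
  rw [mkQ_Dset ha hb,
    Finset.card_image_of_injective _ (dQ_strictMono hb).injective]
  simp

lemma mkQ_pchArea {a b : Fin k → ℕ} (ha : Antitone a) (hb : Antitone b) :
    pchArea (mkQ k a b) = k * k + ∑ i, a i + ∑ i, b i := by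
  rw [pchArea_eq (mkQ_isPartition a b), mkQ_Dset ha hb,
    Finset.sum_image (fun x _ y _ h => (dQ_strictMono hb).injective h)]
  have : ∀ i : Fin k, dQ b i + mkQ k a b (dQ b i) = k + b i.rev + a i := by
    intro i
    rw [mkQ_at_dQ ha hb]
    have := i.isLt
    unfold dQ cQ
    omega
  rw [Finset.sum_congr rfl (fun i _ => this i)]
  rw [Finset.sum_add_distrib, Finset.sum_add_distrib, sum_rev']
  simp [mul_comm]
  omega

end QX

section QofG

lemma toQ_facts {g : ℕ →₀ ℕ} (hg : IsPartition g) {k : ℕ} (hD : (Dset g).card = k) :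
    StrictMono (⇑((Dset g).orderEmbOfFin hD))
    ∧ (∀ i, g ((Dset g).orderEmbOfFin hD i + 1) < g ((Dset g).orderEmbOfFin hD i)
        ∧ g ((Dset g).orderEmbOfFin hD i) ≠ 0)
    ∧ StrictAnti (fun i => g ((Dset g).orderEmbOfFin hD i))
    ∧ (∀ i : Fin k, k - (i : ℕ) ≤ g ((Dset g).orderEmbOfFin hD i))
    ∧ (∀ i : Fin k, (i : ℕ) ≤ (Dset g).orderEmbOfFin hD i)
    ∧ Finset.image (⇑((Dset g).orderEmbOfFin hD)) Finset.univ = Dset g := by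
  have hdmono : StrictMono (⇑((Dset g).orderEmbOfFin hD)) :=
    ((Dset g).orderEmbOfFin hD).strictMono
  have hdmem : ∀ i, (Dset g).orderEmbOfFin hD i ∈ Dset g :=
    fun i => Finset.orderEmbOfFin_mem _ _ i
  have hdesc : ∀ i, g ((Dset g).orderEmbOfFin hD i + 1) < g ((Dset g).orderEmbOfFin hD i)
      ∧ g ((Dset g).orderEmbOfFin hD i) ≠ 0 := by
    intro i
    have := hdmem i
    simp only [Dset, Finset.mem_filter, Finsupp.mem_support_iff] at this
    exact ⟨this.2, this.1⟩
  have hcanti : StrictAnti (fun i => g ((Dset g).orderEmbOfFin hD i)) := by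
    intro i j hij
    have h1 : (Dset g).orderEmbOfFin hD i < (Dset g).orderEmbOfFin hD j := hdmono hij
    have h2 := hg ((Dset g).orderEmbOfFin hD i + 1) ((Dset g).orderEmbOfFin hD j) (by omega)
    have h3 := (hdesc i).1
    simp only
    omega
  have hcge : ∀ i : Fin k, k - (i : ℕ) ≤ g ((Dset g).orderEmbOfFin hD i) := by
    intro i
    have hik : (i : ℕ) < k := i.isLt
    have hlast := strictAnti_fin_le hcanti i ⟨k - 1, by omega⟩
      (by rw [Fin.le_def]; simp; omega)
    have := (hdesc ⟨k - 1, by omega⟩).2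
    simp only [Fin.val_mk] at hlast
    omega
  have hdge : ∀ i : Fin k, (i : ℕ) ≤ (Dset g).orderEmbOfFin hD i := by
    intro i
    have hik : (i : ℕ) < k := i.isLt
    have := strictMono_fin_le hdmono ⟨0, by omega⟩ i (by rw [Fin.le_def]; simp)
    simp only [Fin.val_mk] at this
    omega
  have himage : Finset.image (⇑((Dset g).orderEmbOfFin hD)) Finset.univ = Dset g := by
    ext x
    simp only [Finset.mem_image, Finset.mem_univ, true_and]
    constructor
    · rintro ⟨i, rfl⟩; exact hdmem i
    · intro hx
      have : x ∈ Set.range (⇑((Dset g).orderEmbOfFin hD)) := by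
        rw [Finset.range_orderEmbOfFin]
        exact hx
      exact this
  exact ⟨hdmono, hdesc, hcanti, hcge, hdge, himage⟩

lemma toQ_a_antitone {g : ℕ →₀ ℕ} (hg : IsPartition g) {k : ℕ} (hD : (Dset g).card = k) :
    Antitone (fun i : Fin k => g ((Dset g).orderEmbOfFin hD i) - (k - (i : ℕ))) := by
  obtain ⟨hdmono, hdesc, hcanti, hcge, hdge, himage⟩ := toQ_facts hg hD
  intro i j hij
  have h1 := strictAnti_fin_le hcanti i j hij
  have h2 := hcge i
  have h3 := hcge j
  have h4 := Fin.le_def.mp hij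
  have h5 := j.isLt
  simp only at h1 ⊢
  omega

lemma toQ_b_antitone {g : ℕ →₀ ℕ} (hg : IsPartition g) {k : ℕ} (hD : (Dset g).card = k) :
    Antitone (fun i : Fin k => ((Dset g).orderEmbOfFin hD i.rev : ℕ) - ((i.rev : ℕ))) := by
  obtain ⟨hdmono, hdesc, hcanti, hcge, hdge, himage⟩ := toQ_facts hg hD
  intro i j hij
  have hrev : j.rev ≤ i.rev := by
    rw [Fin.le_def]
    simp [Fin.val_rev]
    have := Fin.le_def.mp hij
    have := i.isLt
    have := j.isLt
    omega
  have h1 := strictMono_fin_le hdmono j.rev i.rev hrev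
  have h2 := hdge j.rev
  have h3 := Fin.le_def.mp hrev
  simp only
  omega

lemma toQ_sum {g : ℕ →₀ ℕ} (hg : IsPartition g) {k : ℕ} (hD : (Dset g).card = k) :
    k * k + (∑ i : Fin k, (g ((Dset g).orderEmbOfFin hD i) - (k - (i : ℕ))))
      + (∑ i : Fin k, (((Dset g).orderEmbOfFin hD i.rev : ℕ) - ((i.rev : ℕ))))
      = pchArea g := by
  obtain ⟨hdmono, hdesc, hcanti, hcge, hdge, himage⟩ := toQ_facts hg hD
  have hsumim : ∑ r ∈ Finset.image (⇑((Dset g).orderEmbOfFin hD)) Finset.univ, (r + g r)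
      = ∑ i : Fin k, ((Dset g).orderEmbOfFin hD i + g ((Dset g).orderEmbOfFin hD i)) :=
    Finset.sum_image (fun x _ y _ h => hdmono.injective h)
  rw [himage] at hsumim
  rw [pchArea_eq hg, hsumim]
  have key : ∀ i : Fin k, (Dset g).orderEmbOfFin hD i + g ((Dset g).orderEmbOfFin hD i)
      = k + ((fun j : Fin k => ((Dset g).orderEmbOfFin hD j : ℕ) - (j : ℕ)) i)
        + (g ((Dset g).orderEmbOfFin hD i) - (k - (i : ℕ))) := by
    intro i
    have h1 := hcge i
    have h2 := hdge i
    have h3 := i.isLt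
    simp only
    omega
  rw [Finset.sum_congr rfl (fun i _ => key i), Finset.sum_add_distrib,
    Finset.sum_add_distrib]
  have hrev : ∑ i : Fin k, (((Dset g).orderEmbOfFin hD i.rev : ℕ) - ((i.rev : ℕ)))
      = ∑ i : Fin k, ((fun j : Fin k => ((Dset g).orderEmbOfFin hD j : ℕ) - (j : ℕ)) i) :=
    sum_rev' (fun j : Fin k => ((Dset g).orderEmbOfFin hD j : ℕ) - (j : ℕ))
  rw [hrev]
  simp [mul_comm]
  omega

lemma dg_unique {k : ℕ} {a b : Fin k → ℕ} (ha : Antitone a) (hb : Antitone b)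
    (hD : (Dset (mkQ k a b)).card = k) :
    ⇑((Dset (mkQ k a b)).orderEmbOfFin hD) = dQ b := by
  refine (Finset.orderEmbOfFin_unique hD ?_ (dQ_strictMono hb)).symm
  intro i
  rw [mkQ_Dset ha hb]
  exact Finset.mem_image_of_mem _ (Finset.mem_univ i)

lemma mkQ_reconstruct {g : ℕ →₀ ℕ} (hg : IsPartition g) {k : ℕ} (hk : 1 ≤ k)
    (hD : (Dset g).card = k) :
    mkQ k (fun i => g ((Dset g).orderEmbOfFin hD i) - (k - (i : ℕ)))
      (fun i => ((Dset g).orderEmbOfFin hD i.rev : ℕ) - ((i.rev : ℕ))) = g := by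
  obtain ⟨hdmono, hdesc, hcanti, hcge, hdge, himage⟩ := toQ_facts hg hD
  set d : Fin k → ℕ := ⇑((Dset g).orderEmbOfFin hD) with hd
  set a : Fin k → ℕ := fun i => g (d i) - (k - (i : ℕ)) with hav
  set b : Fin k → ℕ := fun i => d i.rev - ((i.rev : ℕ)) with hbv
  have hdQ : dQ b = d := by
    funext i
    unfold dQ
    rw [hbv]
    simp only [Fin.rev_rev]
    have := hdge i
    omega
  have hcQ : ∀ i, cQ k a i = g (d i) := by
    intro i
    unfold cQ
    rw [hav]
    have := hcge i
    simp only
    omega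
  have haanti : Antitone a := toQ_a_antitone hg hD
  apply Finsupp.ext
  intro s
  rw [mkQ_apply, hdQ]
  by_cases hex : ∃ i, s ≤ d i
  · have hne : (Finset.univ.filter fun i : Fin k => s ≤ d i).Nonempty := by
      obtain ⟨i, hi⟩ := hex
      exact ⟨i, by simp [hi]⟩
    set i₀ := (Finset.univ.filter fun i : Fin k => s ≤ d i).min' hne with hi₀
    have hi₀mem := (Finset.univ.filter fun i : Fin k => s ≤ d i).min'_mem hne
    rw [Finset.mem_filter] at hi₀mem
    have hmin : ∀ j, s ≤ d j → i₀ ≤ j := fun j hj => Finset.min'_le _ _ (by simp [hj])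
    have hsup : (Finset.univ.filter fun i : Fin k => s ≤ d i).sup (cQ k a) = cQ k a i₀ := by
      apply le_antisymm
      · apply Finset.sup_le
        intro j hj
        rw [Finset.mem_filter] at hj
        exact (cQ_strictAnti haanti).antitone (hmin j hj.2)
      · exact Finset.le_sup (Finset.mem_filter.mpr ⟨Finset.mem_univ _, hi₀mem.2⟩)
    have hnodesc : ∀ r, s ≤ r → r < d i₀ → g r ≤ g (r + 1) := by
      intro r hr1 hr2
      by_contra hc
      push_neg at hc
      have hrD : r ∈ Dset g := Finset.mem_filter.mpr
        ⟨Finsupp.mem_support_iff.mpr (by omega), hc⟩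
      rw [← himage] at hrD
      rw [Finset.mem_image] at hrD
      obtain ⟨j, _, rfl⟩ := hrD
      have := hdmono.monotone (hmin j hr1)
      omega
    have h1 : g s ≤ g (d i₀) := no_descent_le g s (d i₀) hi₀mem.2 hnodesc
    have h2 : g (d i₀) ≤ g s := hg s (d i₀) hi₀mem.2
    rw [hsup, hcQ]
    omega
  · push_neg at hex
    have hempty : (Finset.univ.filter fun i : Fin k => s ≤ d i) = ∅ := by
      apply Finset.filter_eq_empty_iff.mpr
      intro i _
      exact not_le.mpr (hex i)
    have hgs : g s = 0 := by
      by_contra hgs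
      have hsupp : s ∈ g.support := Finsupp.mem_support_iff.mpr hgs
      have hsM : s ≤ g.support.sup id := Finset.le_sup (f := id) hsupp
      have hM : g (g.support.sup id + 1) = 0 := by
        rw [← Finsupp.notMem_support_iff]
        intro hMs
        have h := Finset.le_sup (s := g.support) (f := id) hMs
        simp only [id_eq] at h
        omega
      obtain ⟨r, hr1, hr2, hr3⟩ := exists_descent (show s ≤ g.support.sup id + 1 by omega)
        (by rw [hM]; omega)
      have hrD : r ∈ Dset g := Finset.mem_filter.mpr
        ⟨Finsupp.mem_support_iff.mpr (by omega), hr3⟩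
      rw [← himage, Finset.mem_image] at hrD
      obtain ⟨j, _, rfl⟩ := hrD
      exact absurd hr1 (not_le.mpr (hex j))
    rw [hempty, hgs]
    simp

end QofG

lemma card_Q_eq (n k : ℕ) (hk : 1 ≤ k) :
    Nat.card {f : ℕ →₀ ℕ // IsPartition f ∧ pchArea f = n ∧ (pcorners f).card = k}
      = Nat.card {p : (Fin k → ℕ) × (Fin k → ℕ) //
          Antitone p.1 ∧ Antitone p.2 ∧ k * k + (∑ i, p.1 i) + (∑ i, p.2 i) = n} := by
  apply Nat.card_congr
  refine ⟨fun ⟨g, hg, hA, hC⟩ =>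
      ⟨((fun i => g ((Dset g).orderEmbOfFin ((pcorners_card hg).symm.trans hC) i)
            - (k - (i : ℕ))),
        (fun i => ((Dset g).orderEmbOfFin ((pcorners_card hg).symm.trans hC) i.rev : ℕ)
            - ((i.rev : ℕ)))),
        toQ_a_antitone hg _, toQ_b_antitone hg _, by
          rw [toQ_sum hg ((pcorners_card hg).symm.trans hC)]; exact hA⟩,
    fun ⟨⟨a, b⟩, ha, hb, hsum⟩ => ⟨mkQ k a b, mkQ_isPartition a b,
      by rw [mkQ_pchArea ha hb]; exact hsum,
      by rw [pcorners_card (mkQ_isPartition a b), mkQ_card_Dset ha hb]⟩, ?_, ?_⟩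
  · rintro ⟨g, hg, hA, hC⟩
    apply Subtype.ext
    exact mkQ_reconstruct hg hk ((pcorners_card hg).symm.trans hC)
  · rintro ⟨⟨a, b⟩, ha, hb, hsum⟩
    apply Subtype.ext
    have hD : (Dset (mkQ k a b)).card = k := mkQ_card_Dset ha hb
    have hkey := dg_unique ha hb hD
    have h1 : (fun i : Fin k => mkQ k a b ((Dset (mkQ k a b)).orderEmbOfFin hD i)
        - (k - (i : ℕ))) = a := by
      funext i
      rw [show (Dset (mkQ k a b)).orderEmbOfFin hD i = dQ b i by rw [hkey],
        mkQ_at_dQ ha hb]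
      unfold cQ
      simp
    have h2 : (fun i : Fin k => ((Dset (mkQ k a b)).orderEmbOfFin hD i.rev : ℕ)
        - ((i.rev : ℕ))) = b := by
      funext i
      rw [show (Dset (mkQ k a b)).orderEmbOfFin hD i.rev = dQ b i.rev by rw [hkey]]
      unfold dQ
      simp only [Fin.rev_rev]
      simp
    simp only [h1, h2]

/-- For all `n, k ≥ 1`, the number of partitions `λ` with `|λ| = n` and
`d(λ) = k` equals the number of partitions `λ` with `|λ|_c = n` and
`cor(λ) = k`. -/
theorem statement3 (n k : ℕ) (hn : 1 ≤ n) (hk : 1 ≤ k) :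
    Nat.card {f : ℕ →₀ ℕ // IsPartition f ∧ parea f = n ∧ pdurfee f = k}
      = Nat.card {f : ℕ →₀ ℕ // IsPartition f ∧ pchArea f = n ∧ (pcorners f).card = k} := by
  rw [card_P_eq n k hk, card_Q_eq n k hk]
end
end
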